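/- arXiv:2205.05267 — 12 statements merged into one kernel-verified Lean document; each statement's English description precedes it below -/
import Mathlib

section
/- Let A be an n×n matrix over a commutative ring R and set f = det(diag(x_1,...,x_n) + A) ∈ R[x_1,...,x_n]. Then for any distinct i,j ∈ [n], the Rayleigh difference Δ_ij(f) = (∂f/∂x_i)(∂f/∂x_j) − f·(∂²f/∂x_i∂x_j) factors as det(M(i,j))·det(M(j,i)), where M = diag(x_1,...,x_n)+A and M(i,j) denotes M with row i and column j deleted. -/
open MvPolynomial Matrix

/-- The Rayleigh difference `Δ_ij(f) = (∂f/∂x_i)(∂f/∂x_j) − f·(∂²f/∂x_i∂x_j)`. -/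
noncomputable def Rayleigh {R : Type*} [CommRing R] {σ : Type*} (i j : σ)
    (f : MvPolynomial σ R) : MvPolynomial σ R :=
  pderiv i f * pderiv j f - f * pderiv i (pderiv j f)

lemma pderiv_finset_prod {R σ ι : Type*} [CommRing R] [DecidableEq ι] (k : σ) (s : Finset ι)
    (g : ι → MvPolynomial σ R) :
    pderiv k (∏ t ∈ s, g t) = ∑ t ∈ s, pderiv k (g t) * ∏ t' ∈ s.erase t, g t' := by
  induction s using Finset.induction_on with
  | empty => simp
  | @insert a s ha ih =>
    rw [Finset.prod_insert ha, pderiv_mul, ih, Finset.sum_insert ha,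
      Finset.erase_insert ha, Finset.mul_sum]
    congr 1
    refine Finset.sum_congr rfl fun t ht => ?_
    rw [Finset.erase_insert_of_ne (by rintro rfl; exact ha ht), Finset.prod_insert
      (fun h => ha (Finset.erase_subset _ _ h))]
    ring

lemma updateCol_comm' {R n : Type*} [DecidableEq n] (M : Matrix n n R) {i j : n}
    (hij : i ≠ j) (u v : n → R) :
    (M.updateCol i u).updateCol j v = (M.updateCol j v).updateCol i u := by
  ext p q
  simp only [Matrix.updateCol_apply]
  split_ifs with h1 h2
  · exact absurd (h2.symm.trans h1) hij
  · rfl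
  · rfl
  · rfl

lemma det_updateColumn_single {R : Type*} [CommRing R] {n : Type*} [DecidableEq n] [Fintype n]
    (M : Matrix n n R) (l : n) :
    (M.updateCol l (Pi.single l 1)).det = adjugate M l l := by
  rw [← Matrix.det_transpose, ← Matrix.updateRow_transpose, ← Matrix.adjugate_apply,
    ← Matrix.adjugate_transpose, Matrix.transpose_apply]
lemma perm_eq_one_or_swap {n : Type*} [DecidableEq n] {i j : n} (hij : i ≠ j)
    (σ : Equiv.Perm n) (h : ∀ t, t ≠ i → t ≠ j → σ t = t) :
    σ = 1 ∨ σ = Equiv.swap i j := by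
  have hmem : ∀ t : n, σ t ≠ i → σ t ≠ j → σ t = t := by
    intro t h1 h2
    have := h (σ t) h1 h2
    exact σ.injective this
  have hi : σ i = i ∨ σ i = j := by
    by_contra hc
    push_neg at hc
    exact hc.1 (hmem i hc.1 hc.2)
  rcases hi with hi | hi
  · left
    have hj : σ j = j := by
      by_contra hc
      rcases (by by_contra hc2; push_neg at hc2; exact hc (hmem j hc2.1 hc2.2) : σ j = i ∨ σ j = j) with h' | h'
      · exact hij (σ.injective (hi.trans h'.symm))
      · exact hc h'
    ext t
    by_cases h1 : t = i
    · simp [h1, hi]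
    · by_cases h2 : t = j
      · simp [h2, hj]
      · simp [h t h1 h2]
  · right
    have hj : σ j = i := by
      by_contra hc
      rcases (by by_contra hc2; push_neg at hc2; exact hc2.2 (hmem j hc2.1 hc2.2) : σ j = i ∨ σ j = j) with h' | h'
      · exact hc h'
      · exact hij.symm (σ.injective (h'.trans hi.symm))
    ext t
    by_cases h1 : t = i
    · simp [h1, hi, Equiv.swap_apply_left]
    · by_cases h2 : t = j
      · simp [h2, hj, Equiv.swap_apply_right]
      · simp [h t h1 h2, Equiv.swap_apply_of_ne_of_ne h1 h2]

lemma det_one_updateCol_two {R : Type*} [CommRing R] {n : Type*} [DecidableEq n] [Fintype n]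
    {i j : n} (hij : i ≠ j) (u v : n → R) :
    (((1 : Matrix n n R).updateCol i u).updateCol j v).det
      = u i * v j - u j * v i := by
  set Mat := ((1 : Matrix n n R).updateCol i u).updateCol j v with hMat
  have hMatApply : ∀ p q : n, Mat p q = if q = j then v p else if q = i then u p else
      (1 : Matrix n n R) p q := by
    intro p q
    simp [hMat, Matrix.updateCol_apply]
  rw [Matrix.det_apply]
  rw [← Finset.sum_subset (Finset.subset_univ ({1, Equiv.swap i j} : Finset (Equiv.Perm n)))]
  · rw [Finset.sum_insert (by simp [Finset.mem_singleton, Ne.symm, (Equiv.swap_eq_one_iff).not.mpr hij, eq_comm])]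
    rw [Finset.sum_singleton]
    have e1 : ∀ (σp : Equiv.Perm n), ∏ t, Mat (σp t) t =
        Mat (σp i) i * (Mat (σp j) j * ∏ t ∈ (Finset.univ.erase i).erase j, Mat (σp t) t) := by
      intro σp
      rw [← Finset.mul_prod_erase Finset.univ _ (Finset.mem_univ i)]
      congr 1
      rw [← Finset.mul_prod_erase _ _ (Finset.mem_erase.mpr ⟨hij.symm, Finset.mem_univ j⟩)]
    have erest : ∀ (σp : Equiv.Perm n), (∀ t, t ≠ i → t ≠ j → σp t = t) →
        ∏ t ∈ (Finset.univ.erase i).erase j, Mat (σp t) t = 1 := by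
      intro σp hσ
      refine Finset.prod_eq_one fun t ht => ?_
      rw [Finset.mem_erase, Finset.mem_erase] at ht
      rw [hσ t ht.2.1 ht.1, hMatApply]
      simp [ht.1, ht.2.1, Matrix.one_apply]
    rw [e1 1, e1 (Equiv.swap i j), erest 1 (fun t _ _ => rfl),
      erest (Equiv.swap i j) (fun t h1 h2 => Equiv.swap_apply_of_ne_of_ne h1 h2)]
    simp only [Equiv.Perm.sign_one, Equiv.Perm.sign_swap hij, Equiv.Perm.one_apply,
      Equiv.swap_apply_left, Equiv.swap_apply_right, one_smul, Units.neg_smul, one_smul]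
    rw [hMatApply i i, hMatApply j j, hMatApply j i, hMatApply i j]
    simp only [if_pos rfl, if_neg hij, if_neg hij.symm, if_true]
    ring
  · intro σp _ hσp
    have : ∃ t, t ≠ i ∧ t ≠ j ∧ σp t ≠ t := by
      by_contra hc
      push_neg at hc
      rcases perm_eq_one_or_swap hij σp (fun t h1 h2 => hc t h1 h2) with h | h
      · exact hσp (by simp [h])
      · exact hσp (by simp [h])
    obtain ⟨t, ht1, ht2, ht3⟩ := this
    rw [Finset.prod_eq_zero (Finset.mem_univ t), smul_zero]
    rw [hMatApply]
    simp [ht1, ht2, Matrix.one_apply, ht3]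
lemma pderiv_det_diag {R : Type*} [CommRing R] {σ : Type*} [DecidableEq σ] {m : ℕ}
    (e : Fin m → σ) (he : Function.Injective e)
    (B : Matrix (Fin m) (Fin m) (MvPolynomial σ R))
    (hB : ∀ (k : σ) (p q : Fin m), pderiv k (B p q) = 0) (l : Fin m) :
    pderiv (e l) (Matrix.diagonal (fun t => X (e t)) + B).det
      = ((Matrix.diagonal (fun t => X (e t)) + B).updateCol l (Pi.single l 1)).det := by
  set M := Matrix.diagonal (fun t => X (e t)) + B with hM
  have hder : ∀ p q : Fin m, pderiv (e l) (M p q)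
      = if p = q ∧ q = l then 1 else 0 := by
    intro p q
    rw [hM]
    simp only [Matrix.add_apply, Matrix.diagonal_apply, map_add, hB, add_zero]
    rcases eq_or_ne p q with rfl | hpq
    · rcases eq_or_ne p l with rfl | hql
      · simp
      · simp [hql, Pi.single_eq_of_ne (show e p ≠ e l from fun h => hql (he h))]
    · simp [hpq]
  rw [Matrix.det_apply, Matrix.det_apply, map_sum]
  refine Finset.sum_congr rfl fun σp _ => ?_
  have : pderiv (e l) (Equiv.Perm.sign σp • ∏ t, M (σp t) t)
      = Equiv.Perm.sign σp • pderiv (e l) (∏ t, M (σp t) t) := by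
    rcases Int.units_eq_one_or (Equiv.Perm.sign σp) with h | h <;> simp [h]
  rw [this]
  congr 1
  rw [pderiv_finset_prod]
  rw [Finset.sum_eq_single l]
  · rw [hder]
    rw [← Finset.mul_prod_erase Finset.univ _ (Finset.mem_univ l)]
    rw [Matrix.updateCol_self, Pi.single_apply]
    rcases eq_or_ne (σp l) l with h | h
    · rw [if_pos ⟨h, rfl⟩, if_pos h]
      congr 1
      refine Finset.prod_congr rfl fun t ht => ?_
      rw [Matrix.updateCol_ne (Finset.mem_erase.mp ht).1]
    · rw [if_neg (fun hc => h hc.1), if_neg h, zero_mul, zero_mul]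
  · intro t _ htl
    rw [hder, if_neg (fun hc => htl hc.2), zero_mul]
  · intro h
    exact absurd (Finset.mem_univ l) h
lemma dj_domain {R : Type*} [CommRing R] [IsDomain R] {n : Type*} [DecidableEq n] [Fintype n]
    (M : Matrix n n R) (hM : M.det ≠ 0) {i j : n} (hij : i ≠ j) :
    adjugate M i i * adjugate M j j -
      M.det * (((M.updateCol i (Pi.single i 1)).updateCol j (Pi.single j 1)).det)
      = adjugate M j i * adjugate M i j := by
  set Q := ((1 : Matrix n n R).updateCol i (fun r => adjugate M r i)).updateCol j
      (fun r => adjugate M r j) with hQ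
  have hdetQ : Q.det = adjugate M i i * adjugate M j j - adjugate M j i * adjugate M i j :=
    det_one_updateCol_two hij _ _
  have hadj : ∀ p q : n, (M * adjugate M) p q = M.det * (if p = q then 1 else 0) := by
    intro p q
    rw [Matrix.mul_adjugate]
    simp [Matrix.smul_apply, Matrix.one_apply]
  set U := ((M.updateCol i (Pi.single i 1)).updateCol j (Pi.single j 1)).det with hU
  have hMQ : M * Q = (M.updateCol i (M.det • (Pi.single i 1 : n → R))).updateCol j
      (M.det • (Pi.single j 1 : n → R)) := by
    ext p q
    rw [Matrix.mul_apply]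
    have hQapply : ∀ r, Q r q = if q = j then adjugate M r j else if q = i then adjugate M r i
        else (1 : Matrix n n R) r q := by
      intro r; rw [hQ]; simp [Matrix.updateCol_apply]
    simp only [hQapply]
    rw [Matrix.updateCol_apply, Matrix.updateCol_apply]
    by_cases hqj : q = j
    · simp only [if_pos hqj]
      rw [← Matrix.mul_apply, hadj, Pi.smul_apply, Pi.single_apply, smul_eq_mul]
    · simp only [if_neg hqj]
      by_cases hqi : q = i
      · simp only [if_pos hqi]
        rw [← Matrix.mul_apply, hadj, Pi.smul_apply, Pi.single_apply, smul_eq_mul]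
      · simp only [if_neg hqi]
        simp [Matrix.one_apply, mul_ite, mul_one, mul_zero]
  have hdet1 : (M * Q).det = M.det * (M.det * U) := by
    rw [hMQ, Matrix.det_updateCol_smul, updateCol_comm' _ hij,
      Matrix.det_updateCol_smul, updateCol_comm' _ hij.symm, hU]
  have hdet2 : (M * Q).det = M.det * Q.det := by rw [Matrix.det_mul]
  have hcancel : Q.det = M.det * U := mul_left_cancel₀ hM (hdet2.symm.trans hdet1)
  rw [← hcancel, hdetQ]
  ring
lemma ringHom_comp_single {R S n : Type*} [DecidableEq n] [NonAssocSemiring R]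
    [NonAssocSemiring S] (φ : R →+* S) (i : n) :
    φ ∘ (Pi.single i (1 : R)) = Pi.single i (1 : S) := by
  funext r
  simp [Function.comp, Pi.single_apply, apply_ite φ]

lemma dj {R : Type*} [CommRing R] {n : Type*} [DecidableEq n] [Fintype n]
    (M : Matrix n n R) {i j : n} (hij : i ≠ j) :
    adjugate M i i * adjugate M j j -
      M.det * (((M.updateCol i (Pi.single i 1)).updateCol j (Pi.single j 1)).det)
      = adjugate M j i * adjugate M i j := by
  set R₀ := MvPolynomial (n × n) ℤ with hR₀
  set M₀ : Matrix n n R₀ := Matrix.of (fun p q => X (p, q)) with hM₀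
  have hdet : M₀.det ≠ 0 := by
    intro h
    have h2 := congrArg (eval (fun pq : n × n => if pq.1 = pq.2 then (1 : ℤ) else 0)) h
    rw [map_zero, RingHom.map_det] at h2
    have h3 : (eval (fun pq : n × n => if pq.1 = pq.2 then (1 : ℤ) else 0)).mapMatrix M₀
        = (1 : Matrix n n ℤ) := by
      ext p q
      simp [hM₀, Matrix.one_apply]
    rw [h3, Matrix.det_one] at h2
    exact one_ne_zero h2
  set φ : R₀ →+* R := (eval₂Hom (Int.castRingHom R) fun pq : n × n => M pq.1 pq.2 : R₀ →+* R)
    with hφ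
  have hMφ : φ.mapMatrix M₀ = M := by
    ext p q
    exact eval₂Hom_X' (Int.castRingHom R) (fun pq : n × n => M pq.1 pq.2) (p, q)
  have key := dj_domain M₀ hdet hij
  have h2 := congrArg φ key
  rw [map_sub, _root_.map_mul, _root_.map_mul, _root_.map_mul] at h2
  have eadj : ∀ a b : n, φ (adjugate M₀ a b) = adjugate M a b := by
    intro a b
    calc φ (adjugate M₀ a b) = (φ.mapMatrix (adjugate M₀)) a b := rfl
      _ = adjugate (φ.mapMatrix M₀) a b := by rw [RingHom.map_adjugate]
      _ = adjugate M a b := by rw [hMφ]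
  have edet : φ M₀.det = M.det := by rw [RingHom.map_det, hMφ]
  have eU : φ (((M₀.updateCol i (Pi.single i 1)).updateCol j (Pi.single j 1)).det)
      = ((M.updateCol i (Pi.single i 1)).updateCol j (Pi.single j 1)).det := by
    rw [RingHom.map_det]
    congr 1
    calc φ.mapMatrix ((M₀.updateCol i (Pi.single i 1)).updateCol j (Pi.single j 1))
        = ((φ.mapMatrix M₀).updateCol i (φ ∘ Pi.single i 1)).updateCol j
            (φ ∘ Pi.single j 1) := by
          simp only [RingHom.mapMatrix_apply, Matrix.map_updateCol]
      _ = (M.updateCol i (Pi.single i 1)).updateCol j (Pi.single j 1) := by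
          rw [hMφ, ringHom_comp_single, ringHom_comp_single]
  rw [eadj, eadj, eadj, eadj, edet, eU] at h2
  exact h2

lemma det_updateCol_single_eq_submatrix {R : Type*} [CommRing R] {m : ℕ}
    (N : Matrix (Fin (m + 1)) (Fin (m + 1)) R) (l : Fin (m + 1)) :
    (N.updateCol l (Pi.single l 1)).det = (N.submatrix l.succAbove l.succAbove).det := by
  rw [det_updateColumn_single, Matrix.adjugate_fin_succ_eq_det_submatrix,
    Even.neg_one_pow ⟨(l : ℕ), rfl⟩, one_mul]

/-- for `f = det(diag(x) + A)`,
`Δ_ij(f) = det(M(i,j))·det(M(j,i))` where `M(i,j)` deletes row `i` and column `j`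
of `M = diag(x) + A`. -/
theorem stmt2 {R : Type*} [CommRing R] {n : ℕ} (A : Matrix (Fin (n + 2)) (Fin (n + 2)) R)
    (i j : Fin (n + 2)) (hij : i ≠ j) :
    Rayleigh i j
        (Matrix.diagonal (fun t => (X t : MvPolynomial (Fin (n + 2)) R)) + A.map C).det =
      ((Matrix.diagonal (fun t => (X t : MvPolynomial (Fin (n + 2)) R)) + A.map C).submatrix
          i.succAbove j.succAbove).det *
        ((Matrix.diagonal (fun t => (X t : MvPolynomial (Fin (n + 2)) R)) + A.map C).submatrix
          j.succAbove i.succAbove).det := by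
  set S := MvPolynomial (Fin (n + 2)) R with hS
  set M : Matrix (Fin (n + 2)) (Fin (n + 2)) S :=
    Matrix.diagonal (fun t => (X t : S)) + A.map C with hMdef
  have hB : ∀ (k : Fin (n + 2)) (p q : Fin (n + 2)), pderiv k ((A.map C) p q) = 0 := by
    intro k p q
    simp [Matrix.map_apply]
  have h_pd : ∀ l : Fin (n + 2), pderiv l M.det = (M.updateCol l (Pi.single l 1)).det :=
    fun l => pderiv_det_diag (id : Fin (n + 2) → Fin (n + 2)) (fun a b h => h) (A.map C) hB l
  have h1 : pderiv i M.det = adjugate M i i := (h_pd i).trans (det_updateColumn_single M i)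
  have h2 : pderiv j M.det = adjugate M j j := (h_pd j).trans (det_updateColumn_single M j)
  obtain ⟨i', hi'⟩ := Fin.exists_succAbove_eq hij
  have hsub : M.submatrix j.succAbove j.succAbove
      = Matrix.diagonal (fun t => (X (j.succAbove t) : S))
        + (A.submatrix j.succAbove j.succAbove).map C := by
    refine Matrix.ext fun p q => ?_
    by_cases h : p = q
    · subst h
      simp [hMdef, Matrix.add_apply, Matrix.map_apply, Matrix.diagonal_apply_eq]
    · simp [hMdef, Matrix.add_apply, Matrix.map_apply, Matrix.diagonal_apply_ne _ h,
        Matrix.diagonal_apply_ne _ (fun hc => h (Fin.succAbove_right_injective hc)), h]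
  have hB' : ∀ (k : Fin (n + 2)) (p q : Fin (n + 1)),
      pderiv k (((A.submatrix j.succAbove j.succAbove).map C) p q) = 0 := by
    intro k p q
    simp [Matrix.map_apply]
  have step1 : pderiv j M.det = (M.submatrix j.succAbove j.succAbove).det :=
    (h_pd j).trans (det_updateCol_single_eq_submatrix M j)
  have step2 : pderiv i ((M.submatrix j.succAbove j.succAbove).det)
      = ((M.submatrix j.succAbove j.succAbove).updateCol i' (Pi.single i' 1)).det := by
    rw [hsub, ← hi']
    exact pderiv_det_diag j.succAbove Fin.succAbove_right_injective _ hB' i'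
  have step3 : (M.submatrix j.succAbove j.succAbove).updateCol i' (Pi.single i' 1)
      = (M.updateCol i (Pi.single i 1)).submatrix j.succAbove j.succAbove := by
    refine Matrix.ext fun p q => ?_
    rw [Matrix.submatrix_apply, Matrix.updateCol_apply, Matrix.updateCol_apply,
      Matrix.submatrix_apply]
    have hq : q = i' ↔ j.succAbove q = i := by
      rw [← hi', Fin.succAbove_right_injective.eq_iff]
    by_cases h : q = i'
    · rw [if_pos h, if_pos (hq.mp h)]
      by_cases hp : p = i'
      · rw [hp, Pi.single_eq_same, hi', Pi.single_eq_same]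
      · rw [Pi.single_eq_of_ne hp, Pi.single_eq_of_ne
          (fun hc => hp (Fin.succAbove_right_injective (hc.trans hi'.symm)))]
    · rw [if_neg h, if_neg (fun hc => h (hq.mpr hc))]
  have h3 : pderiv i (pderiv j M.det)
      = ((M.updateCol i (Pi.single i 1)).updateCol j (Pi.single j 1)).det := by
    rw [step1, step2, step3,
      ← det_updateCol_single_eq_submatrix (M.updateCol i (Pi.single i 1)) j]
  show pderiv i M.det * pderiv j M.det - M.det * pderiv i (pderiv j M.det) = _
  rw [h3, h1, h2, dj M hij, Matrix.adjugate_fin_succ_eq_det_submatrix,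
    Matrix.adjugate_fin_succ_eq_det_submatrix, Nat.add_comm (j : ℕ) (i : ℕ),
    mul_mul_mul_comm, ← pow_add, Even.neg_one_pow ⟨(i : ℕ) + (j : ℕ), rfl⟩, one_mul]
end

section
/- Let R be a UFD and f ∈ R[x_1,...,x_n] be multiaffine in x_1,...,x_n with coefficient of x_1···x_n equal to one. If f = g·h, then there is a subset I ⊆ [n] such that (after rescaling g and h by units) g is multiaffine in {x_i : i ∈ I} with degree 0 in x_j for j ∉ I and leading coefficient of ∏_{i∈I} x_i equal to 1, and h is multiaffine in {x_j : j ∉ I} with degree 0 in x_i for i ∈ I and leading coefficient of ∏_{j∉I} x_j equal to 1. -/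
set_option maxHeartbeats 1000000

open MvPolynomial

lemma degOf_mul_eq {R : Type*} [CommRing R] [IsDomain R] {n : ℕ}
    (g h : MvPolynomial (Fin n) R) (hg : g ≠ 0) (hh : h ≠ 0) (i : Fin n) :
    (g * h).degreeOf i = g.degreeOf i + h.degreeOf i := by
  rcases n with _ | m
  · exact i.elim0
  set e := Equiv.swap i (0 : Fin (m + 1)) with he
  have key : ∀ p : MvPolynomial (Fin (m + 1)) R,
      p.degreeOf i = (finSuccEquiv R m (rename e p)).natDegree := by
    intro p
    rw [natDegree_finSuccEquiv, ← degreeOf_rename_of_injective e.injective i,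
      Equiv.swap_apply_left]
  have hrg : finSuccEquiv R m (rename (⇑e) g) ≠ 0 := by
    simp only [ne_eq, EmbeddingLike.map_eq_zero_iff]
    exact fun h0 => hg (rename_injective _ e.injective (by simpa using h0))
  have hrh : finSuccEquiv R m (rename (⇑e) h) ≠ 0 := by
    simp only [ne_eq, EmbeddingLike.map_eq_zero_iff]
    exact fun h0 => hh (rename_injective _ e.injective (by simpa using h0))
  rw [key, key, key, map_mul, map_mul, Polynomial.natDegree_mul hrg hrh]

lemma degOf_unit_smul {R : Type*} [CommRing R] {n : ℕ} (u : Rˣ)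
    (g : MvPolynomial (Fin n) R) (i : Fin n) :
    ((u : R) • g).degreeOf i = g.degreeOf i := by
  have h1 : ∀ (c : R) (p : MvPolynomial (Fin n) R), (c • p).degreeOf i ≤ p.degreeOf i := by
    intro c p
    rw [smul_eq_C_mul]
    exact degreeOf_C_mul_le p i c
  refine le_antisymm (h1 _ _) ?_
  have := h1 ((u⁻¹ : Rˣ) : R) ((u : R) • g)
  rwa [smul_smul, Units.inv_mul, one_smul] at this

/-- if `f` is multiaffine in `x_1,...,x_n` with coefficient of
`x_1⋯x_n` equal to one, and `f = g·h`, then after rescaling by a unit, `g` is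
multiaffine in `{x_i : i ∈ I}` with leading coefficient one, and `h` is
multiaffine in the complementary variables with leading coefficient one. -/
theorem stmt3 {R : Type*} [CommRing R] [IsDomain R] [UniqueFactorizationMonoid R]
    {n : ℕ} (f g h : MvPolynomial (Fin n) R)
    (hma : ∀ i, f.degreeOf i ≤ 1)
    (hlead : coeff (∑ i : Fin n, Finsupp.single i 1) f = 1)
    (hfgh : f = g * h) :
    ∃ (I : Finset (Fin n)) (u : Rˣ),
      (∀ i, ((u : R) • g).degreeOf i ≤ 1) ∧
      (∀ i ∉ I, ((u : R) • g).degreeOf i = 0) ∧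
      coeff (∑ i ∈ I, Finsupp.single i 1) ((u : R) • g) = 1 ∧
      (∀ i, (((u⁻¹ : Rˣ) : R) • h).degreeOf i ≤ 1) ∧
      (∀ i ∈ I, (((u⁻¹ : Rˣ) : R) • h).degreeOf i = 0) ∧
      coeff (∑ i ∈ Iᶜ, Finsupp.single i 1) (((u⁻¹ : Rˣ) : R) • h) = 1 := by
  classical
  set d : Fin n →₀ ℕ := ∑ i : Fin n, Finsupp.single i 1 with hdd
  have hd : ∀ j, d j = 1 := by
    intro j
    simp [hdd, Finsupp.single_apply, Finset.sum_ite_eq']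
  have hf0 : f ≠ 0 := fun h0 => by simp [h0] at hlead
  have hg0 : g ≠ 0 := fun h0 => hf0 (by simp [hfgh, h0])
  have hh0 : h ≠ 0 := fun h0 => hf0 (by simp [hfgh, h0])
  have hdegf : ∀ i, f.degreeOf i = 1 := by
    intro i
    refine le_antisymm (hma i) ?_
    have : d ∈ f.support := mem_support_iff.mpr (by simp [hlead])
    have := monomial_le_degreeOf i this
    rwa [hd] at this
  have hsum : ∀ i, g.degreeOf i + h.degreeOf i = 1 := by
    intro i
    rw [← degOf_mul_eq g h hg0 hh0 i, ← hfgh, hdegf]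
  set I : Finset (Fin n) := Finset.univ.filter (fun i => g.degreeOf i = 1) with hI
  have hgI : ∀ i ∈ I, g.degreeOf i = 1 := fun i hi => (Finset.mem_filter.mp hi).2
  have hgIc : ∀ i ∉ I, g.degreeOf i = 0 := by
    intro i hi
    have h1 : g.degreeOf i ≠ 1 := fun hc => hi (Finset.mem_filter.mpr ⟨Finset.mem_univ i, hc⟩)
    have := hsum i
    omega
  have hhI : ∀ i ∈ I, h.degreeOf i = 0 := by
    intro i hi
    have := hsum i
    have := hgI i hi
    omega
  have hhIc : ∀ i ∉ I, h.degreeOf i = 1 := by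
    intro i hi
    have := hsum i
    have := hgIc i hi
    omega
  set A : Fin n →₀ ℕ := ∑ i ∈ I, Finsupp.single i 1 with hA
  set B : Fin n →₀ ℕ := ∑ i ∈ Iᶜ, Finsupp.single i 1 with hB
  have hAj : ∀ j, A j = if j ∈ I then 1 else 0 := by
    intro j
    simp [hA, Finsupp.single_apply, Finset.sum_ite_eq']
  have hBj : ∀ j, B j = if j ∈ Iᶜ then 1 else 0 := by
    intro j
    simp [hB, Finsupp.single_apply, Finset.sum_ite_eq']
  have hAB : A + B = d := by
    ext j
    have := hAj j
    have := hBj j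
    by_cases hj : j ∈ I <;>
      simp_all [Finsupp.add_apply, hd j, Finset.mem_compl]
  -- support bounds
  have hsuppg : ∀ a ∈ g.support, ∀ j, a j ≤ g.degreeOf j :=
    fun a ha j => monomial_le_degreeOf j ha
  have hsupph : ∀ b ∈ h.support, ∀ j, b j ≤ h.degreeOf j :=
    fun b hb j => monomial_le_degreeOf j hb
  have key : coeff A g * coeff B h = 1 := by
    rw [← hlead, hfgh, coeff_mul]
    symm
    apply Finset.sum_eq_single (A, B)
    · rintro ⟨a, b⟩ hab hne
      rw [Finset.HasAntidiagonal.mem_antidiagonal] at hab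
      by_contra hc
      have hca : coeff a g ≠ 0 := fun h0 => hc (by simp [h0])
      have hcb : coeff b h ≠ 0 := fun h0 => hc (by simp [h0])
      have haS := hsuppg a (mem_support_iff.mpr hca)
      have hbS := hsupph b (mem_support_iff.mpr hcb)
      have haA : a = A := by
        ext j
        have h1 : a j + b j = 1 := by
          have := congrArg (fun m => m j) hab
          simpa [Finsupp.add_apply, hd j] using this
        rw [hAj j]
        by_cases hj : j ∈ I
        · have := hbS j
          have := hhI j hj
          simp only [hj, if_true]
          omega
        · have := haS j
          have := hgIc j hj
          simp only [hj, if_false]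
          omega
      have hbB : b = B := by
        have hab' : a + b = d := hab
        have : a + b = a + B := by rw [hab', haA]; exact hAB.symm
        exact add_left_cancel this
      exact hne (by rw [haA, hbB])
    · intro hmem
      exact absurd (Finset.HasAntidiagonal.mem_antidiagonal.mpr hAB) hmem
  -- build the unit
  refine ⟨I, ⟨coeff B h, coeff A g, by rw [mul_comm]; exact key, key⟩, ?_, ?_, ?_, ?_, ?_, ?_⟩
  · intro i
    rw [degOf_unit_smul]
    have := hsum i
    omega
  · intro i hi
    rw [degOf_unit_smul]
    exact hgIc i hi
  · rw [← hA, coeff_smul, smul_eq_mul]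
    rw [mul_comm]
    exact key
  · intro i
    rw [degOf_unit_smul]
    have := hsum i
    omega
  · intro i hi
    rw [degOf_unit_smul]
    exact hhI i hi
  · rw [← hB, coeff_smul, smul_eq_mul]
    exact key
end

section
/- Let R be a commutative ring and for polynomials g, h ∈ R[x_1,...,x_n], define res_{x_k}(g,h) = (g|_{x_k=0})·(∂h/∂x_k) − (h|_{x_k=0})·(∂g/∂x_k). If f ∈ R[x_1,...,x_n] has degree ≤ 1 in both x_i and x_j (i ≠ j), then Δ_ij(f) = res_{x_i}(∂f/∂x_j, f|_{x_j=0}). -/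
open MvPolynomial

/-- Setting the variable `x_k` equal to `0` in a polynomial. -/
noncomputable def setZero {R : Type*} [CommRing R] {n : ℕ} (k : Fin n)
    (g : MvPolynomial (Fin n) R) : MvPolynomial (Fin n) R :=
  (aeval (fun l => if l = k then 0 else X l)) g

section Aux
variable {R : Type*} [CommRing R] {n : ℕ}

lemma setZero_monomial (k : Fin n) (m : Fin n →₀ ℕ) (c : R) :
    setZero k (monomial m c) = if m k = 0 then monomial m c else 0 := by
  rw [setZero, aeval_monomial]
  split_ifs with h
  · rw [monomial_eq]
    congr 1
    apply Finsupp.prod_congr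
    intro l hl
    rw [if_neg]
    rintro rfl
    exact Finsupp.mem_support_iff.mp hl h
  · rw [Finsupp.prod, Finset.prod_eq_zero (Finsupp.mem_support_iff.mpr h), mul_zero]
    rw [if_pos rfl]
    exact zero_pow h

lemma setZero_sum {ι : Type*} (k : Fin n) (s : Finset ι) (g : ι → MvPolynomial (Fin n) R) :
    setZero k (∑ x ∈ s, g x) = ∑ x ∈ s, setZero k (g x) := by
  simp only [setZero, map_sum]

lemma degreeOf_monomial_le' (l : Fin n) (m : Fin n →₀ ℕ) (c : R) :
    degreeOf l (monomial m c) ≤ m l := by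
  classical
  by_cases hc : c = 0
  · simp [hc]
  · rw [degreeOf_monomial_eq _ _ hc]

lemma degreeOf_setZero_le (k l : Fin n) (f : MvPolynomial (Fin n) R) :
    degreeOf l (setZero k f) ≤ degreeOf l f := by
  conv_lhs => rw [f.as_sum, setZero_sum]
  refine (degreeOf_sum_le _ _ _).trans (Finset.sup_le fun m hm => ?_)
  rw [setZero_monomial]
  refine le_trans ?_ (monomial_le_degreeOf l hm)
  split_ifs
  · exact degreeOf_monomial_le' _ _ _
  · simp

lemma degreeOf_pderiv_le (k l : Fin n) (f : MvPolynomial (Fin n) R) :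
    degreeOf l (pderiv k f) ≤ degreeOf l f := by
  conv_lhs => rw [f.as_sum, map_sum]
  refine (degreeOf_sum_le _ _ _).trans (Finset.sup_le fun m hm => ?_)
  rw [pderiv_monomial]
  refine le_trans ((degreeOf_monomial_le' _ _ _).trans ?_) (monomial_le_degreeOf l hm)
  classical
  rw [Finsupp.tsub_apply]
  exact Nat.sub_le _ _

lemma pderiv_setZero_self (k : Fin n) (f : MvPolynomial (Fin n) R) :
    pderiv k (setZero k f) = 0 := by
  conv_lhs => rw [f.as_sum, setZero_sum, map_sum]
  refine Finset.sum_eq_zero fun m hm => ?_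
  rw [setZero_monomial]
  split_ifs with h
  · rw [pderiv_monomial, h, Nat.cast_zero, mul_zero, monomial_zero]
  · exact map_zero _

lemma pderiv_pderiv_self (k : Fin n) (f : MvPolynomial (Fin n) R)
    (h : degreeOf k f ≤ 1) : pderiv k (pderiv k f) = 0 := by
  conv_lhs => rw [f.as_sum, map_sum, map_sum]
  refine Finset.sum_eq_zero fun m hm => ?_
  have hmk : m k ≤ 1 := (monomial_le_degreeOf k hm).trans h
  classical
  rw [pderiv_monomial, pderiv_monomial, Finsupp.tsub_apply, Finsupp.single_apply, if_pos rfl]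
  interval_cases hh : m k <;> simp

lemma decomp (k : Fin n) (f : MvPolynomial (Fin n) R) (h : degreeOf k f ≤ 1) :
    f = setZero k f + X k * pderiv k f := by
  calc f = ∑ m ∈ f.support, monomial m (coeff m f) := f.as_sum
    _ = ∑ m ∈ f.support, (setZero k (monomial m (coeff m f))
          + X k * pderiv k (monomial m (coeff m f))) := ?_
    _ = setZero k f + X k * pderiv k f := by
          rw [Finset.sum_add_distrib, ← setZero_sum, ← Finset.mul_sum, ← map_sum, ← f.as_sum]
  refine Finset.sum_congr rfl fun m hm => ?_
  have hmk : m k ≤ 1 := (monomial_le_degreeOf k hm).trans h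
  rw [setZero_monomial, pderiv_monomial]
  interval_cases hh : m k
  · simp
  · rw [if_neg (by omega), zero_add, Nat.cast_one, mul_one, X,
      monomial_mul, one_mul]
    have hs : Finsupp.single k 1 + (m - Finsupp.single k 1) = m := by
      ext l
      classical
      rcases eq_or_ne k l with rfl | hne
      · simp [hh]
      · simp [Finsupp.single_apply, hne]
    rw [hs]

end Aux

/-- `res_{x_k}(g,h) = (g|_{x_k=0})·(∂h/∂x_k) − (h|_{x_k=0})·(∂g/∂x_k)`. -/
noncomputable def resOp {R : Type*} [CommRing R] {n : ℕ} (k : Fin n)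
    (g h : MvPolynomial (Fin n) R) : MvPolynomial (Fin n) R :=
  setZero k g * pderiv k h - setZero k h * pderiv k g

/-- if `f` has degree ≤ 1 in `x_i` and `x_j` (`i ≠ j`), then
`Δ_ij(f) = res_{x_i}(∂f/∂x_j, f|_{x_j=0})`. -/
theorem stmt5 {R : Type*} [CommRing R] {n : ℕ} (f : MvPolynomial (Fin n) R)
    (i j : Fin n) (hij : i ≠ j)
    (hi : f.degreeOf i ≤ 1) (hj : f.degreeOf j ≤ 1) :
    Rayleigh i j f = resOp i (pderiv j f) (setZero j f) := by
  have hfd := decomp j f hj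
  have hBi : degreeOf i (pderiv j f) ≤ 1 := (degreeOf_pderiv_le j i f).trans hi
  have hAi : degreeOf i (setZero j f) ≤ 1 := (degreeOf_setZero_le j i f).trans hi
  simp only [Rayleigh, resOp]
  generalize hS : setZero j f = A at hfd hAi ⊢
  generalize hP : pderiv j f = B at hfd hBi ⊢
  rw [hfd]
  simp only [map_add, pderiv_mul, pderiv_X_of_ne (Ne.symm hij), zero_mul, zero_add]
  have hAd := decomp i A hAi
  have hBd := decomp i B hBi
  generalize ha1 : pderiv i A = a1 at hAd ⊢
  generalize ha0 : setZero i A = a0 at hAd ⊢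
  generalize hb1 : pderiv i B = b1 at hBd ⊢
  generalize hb0 : setZero i B = b0 at hBd ⊢
  rw [hAd, hBd]
  ring
end

section
/- Let R be a commutative ring, f ∈ R[x_1,...,x_n] multiaffine in x_1,...,x_n, and γ ∈ SL_2(R) acting on the variable x_k. If k ∈ {i,j}, then Δ_ij(γ·f) = Δ_ij(f). If k ∉ {i,j}, then Δ_ij(γ·f) = γ·Δ_ij(f), where γ acts on Δ_ij(f) as a polynomial of degree ≤ 2 in x_k. -/
open MvPolynomial

/-- The action of `γ = [[a,b],[c,d]]` on a polynomial of degree ≤ `d₀` in `x_k`: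
each power `x_k^m` is replaced by `(a x_k + b)^m (c x_k + d)^{d₀ - m}`. -/
noncomputable def sl2Act {R : Type*} [CommRing R] {n : ℕ} (d₀ : ℕ)
    (γ : Matrix (Fin 2) (Fin 2) R) (k : Fin n) (p : MvPolynomial (Fin n) R) :
    MvPolynomial (Fin n) R :=
  ∑ m ∈ p.support,
    monomial (m.erase k) (coeff m p) *
      (C (γ 0 0) * X k + C (γ 0 1)) ^ (m k) *
      (C (γ 1 0) * X k + C (γ 1 1)) ^ (d₀ - m k)

section Aux

variable {R : Type*} [CommRing R] {n : ℕ}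

/-- Coefficient of a partial derivative. -/
lemma coeff_pderiv' (i : Fin n) (m : Fin n →₀ ℕ) (f : MvPolynomial (Fin n) R) :
    coeff m (pderiv i f) = coeff (m + Finsupp.single i 1) f * ((m i : ℕ) + 1 : ℕ) := by
  conv_lhs => rw [f.as_sum, map_sum]
  rw [coeff_sum]
  simp only [pderiv_monomial, coeff_monomial]
  rw [Finset.sum_eq_single (m + Finsupp.single i 1)]
  · rw [if_pos]
    · congr 1
      push_cast
      simp
    · ext t
      rcases eq_or_ne t i with rfl | ht
      · simp
      · simp [Finsupp.single_eq_of_ne (Ne.symm ht)]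
  · intro s hs hne
    split_ifs with hsm
    · rcases Nat.eq_zero_or_pos (s i) with h0 | h1
      · simp [h0]
      · exfalso
        apply hne
        ext t
        rcases eq_or_ne t i with rfl | ht
        · have := congrArg (fun u : Fin n →₀ ℕ => u t) hsm
          simp only [Finsupp.tsub_apply, Finsupp.single_eq_same,
            Finsupp.add_apply] at this ⊢
          omega
        · have := congrArg (fun u : Fin n →₀ ℕ => u t) hsm
          simp only [Finsupp.tsub_apply, Finsupp.single_eq_of_ne' (Ne.symm ht),
            Finsupp.add_apply] at this ⊢
          omega
    · rfl
  · intro hnotmem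
    rw [notMem_support_iff] at hnotmem
    rw [if_pos, hnotmem, zero_mul]
    ext t
    rcases eq_or_ne t i with rfl | ht
    · simp
    · simp [Finsupp.single_eq_of_ne (Ne.symm ht)]

lemma pderiv_comm' (i j : Fin n) (f : MvPolynomial (Fin n) R) :
    pderiv i (pderiv j f) = pderiv j (pderiv i f) := by
  rcases eq_or_ne i j with rfl | hij
  · rfl
  ext m
  rw [coeff_pderiv', coeff_pderiv', coeff_pderiv', coeff_pderiv']
  have h1 : m + Finsupp.single i 1 + Finsupp.single j 1
      = m + Finsupp.single j 1 + Finsupp.single i 1 := by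
    rw [add_assoc, add_assoc, add_comm (Finsupp.single i 1)]
  rw [h1]
  have h2 : ((m + Finsupp.single i 1 : Fin n →₀ ℕ)) j = m j := by
    rw [Finsupp.add_apply, Finsupp.single_eq_of_ne' hij, add_zero]
  have h3 : ((m + Finsupp.single j 1 : Fin n →₀ ℕ)) i = m i := by
    rw [Finsupp.add_apply, Finsupp.single_eq_of_ne' (Ne.symm hij), add_zero]
  rw [h2, h3]
  ring

/-- `Indep k p` means `p` does not involve the variable `x_k`. -/
def Indep (k : Fin n) (p : MvPolynomial (Fin n) R) : Prop :=
  ∀ m ∈ p.support, m k = 0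

lemma Indep.coeff_eq_zero {k : Fin n} {p : MvPolynomial (Fin n) R} (h : Indep k p)
    {m : Fin n →₀ ℕ} (hm : m k ≠ 0) : coeff m p = 0 := by
  by_contra hc
  exact hm (h m (mem_support_iff.2 hc))

lemma Indep.add {k : Fin n} {p q : MvPolynomial (Fin n) R} (hp : Indep k p) (hq : Indep k q) :
    Indep k (p + q) := by
  intro m hm
  rcases Finset.mem_union.1 (support_add hm) with h | h
  · exact hp m h
  · exact hq m h

lemma Indep.neg {k : Fin n} {p : MvPolynomial (Fin n) R} (hp : Indep k p) : Indep k (-p) := by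
  intro m hm
  refine hp m ?_
  rw [mem_support_iff] at hm ⊢
  simpa using hm

lemma Indep.sub {k : Fin n} {p q : MvPolynomial (Fin n) R} (hp : Indep k p) (hq : Indep k q) :
    Indep k (p - q) := by
  rw [sub_eq_add_neg]; exact hp.add hq.neg

lemma Indep.mul {k : Fin n} {p q : MvPolynomial (Fin n) R} (hp : Indep k p) (hq : Indep k q) :
    Indep k (p * q) := by
  intro m hm
  obtain ⟨a, ha, b, hb, rfl⟩ := Finset.mem_add.1 (support_mul p q hm)
  simp [Finsupp.add_apply, hp a ha, hq b hb]

lemma Indep.pderiv {k i : Fin n} {p : MvPolynomial (Fin n) R} (hp : Indep k p) :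
    Indep k (MvPolynomial.pderiv i p) := by
  intro m hm
  rw [mem_support_iff, coeff_pderiv'] at hm
  by_contra hmk
  have : ((m + Finsupp.single i 1 : Fin n →₀ ℕ)) k ≠ 0 := by
    rw [Finsupp.add_apply]; omega
  rw [hp.coeff_eq_zero this, zero_mul] at hm
  exact hm rfl

lemma Indep.pderiv_self_eq_zero {k : Fin n} {p : MvPolynomial (Fin n) R} (hp : Indep k p) :
    MvPolynomial.pderiv k p = 0 := by
  ext m
  rw [coeff_pderiv', coeff_zero]
  have : ((m + Finsupp.single k 1 : Fin n →₀ ℕ)) k ≠ 0 := by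
    rw [Finsupp.add_apply, Finsupp.single_eq_same]; omega
  rw [hp.coeff_eq_zero this, zero_mul]

lemma indep_pderiv_self {k : Fin n} {f : MvPolynomial (Fin n) R} (h : f.degreeOf k ≤ 1) :
    Indep k (MvPolynomial.pderiv k f) := by
  intro m hm
  rw [mem_support_iff, coeff_pderiv'] at hm
  by_contra hmk
  have hk2 : ((m + Finsupp.single k 1 : Fin n →₀ ℕ)) k ≥ 2 := by
    rw [Finsupp.add_apply, Finsupp.single_eq_same]
    omega
  have : coeff (m + Finsupp.single k 1) f = 0 := by
    by_contra hc
    have := monomial_le_degreeOf k (mem_support_iff.2 hc)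
    omega
  rw [this, zero_mul] at hm
  exact hm rfl

lemma indep_remainder {k : Fin n} {f : MvPolynomial (Fin n) R} (h : f.degreeOf k ≤ 1) :
    Indep k (f - X k * MvPolynomial.pderiv k f) := by
  intro m hm
  rw [mem_support_iff] at hm
  by_contra hmk
  apply hm
  rw [coeff_sub, coeff_X_mul', if_pos (Finsupp.mem_support_iff.2 hmk), coeff_pderiv']
  have hle : Finsupp.single k 1 ≤ m := by
    rw [Finsupp.single_le_iff]; omega
  have h1 : m - Finsupp.single k 1 + Finsupp.single k 1 = m := tsub_add_cancel_of_le hle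
  rw [h1]
  have h2 : ((m - Finsupp.single k 1 : Fin n →₀ ℕ)) k = m k - 1 := by
    rw [Finsupp.tsub_apply, Finsupp.single_eq_same]
  rcases Nat.lt_or_ge (m k) 2 with hlt | hge
  · have : m k = 1 := by omega
    rw [h2, this]
    norm_num
  · have : coeff m f = 0 := by
      by_contra hc
      have := monomial_le_degreeOf k (mem_support_iff.2 hc)
      omega
    rw [this]
    ring

section SL2

variable (d₀ : ℕ) (γ : Matrix (Fin 2) (Fin 2) R) (k : Fin n)

lemma sl2Act_monomial (m : Fin n →₀ ℕ) (c : R) :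
    sl2Act d₀ γ k (monomial m c) =
      monomial (m.erase k) c *
        (C (γ 0 0) * X k + C (γ 0 1)) ^ (m k) *
        (C (γ 1 0) * X k + C (γ 1 1)) ^ (d₀ - m k) := by
  classical
  rcases eq_or_ne c 0 with rfl | hc
  · simp [sl2Act]
  · unfold sl2Act
    rw [support_monomial, if_neg hc, Finset.sum_singleton, coeff_monomial, if_pos rfl]

lemma sl2Act_zero : sl2Act d₀ γ k (0 : MvPolynomial (Fin n) R) = 0 := by
  simp [sl2Act]

lemma sl2Act_eq_sum (p : MvPolynomial (Fin n) R) :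
    sl2Act d₀ γ k p = (AddMonoidAlgebra.coeff p).sum fun m c =>
      monomial (m.erase k) c *
        (C (γ 0 0) * X k + C (γ 0 1)) ^ (m k) *
        (C (γ 1 0) * X k + C (γ 1 1)) ^ (d₀ - m k) := by
  rw [MvPolynomial.sum_def]
  rfl

lemma sl2Act_add (p q : MvPolynomial (Fin n) R) :
    sl2Act d₀ γ k (p + q) = sl2Act d₀ γ k p + sl2Act d₀ γ k q := by
  rw [sl2Act_eq_sum, sl2Act_eq_sum, sl2Act_eq_sum]
  refine Finsupp.sum_add_index' (fun m => by simp) fun m b₁ b₂ => ?_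
  rw [map_add, add_mul, add_mul]

lemma sl2Act_sum {α : Type*} (s : Finset α) (F : α → MvPolynomial (Fin n) R) :
    sl2Act d₀ γ k (∑ x ∈ s, F x) = ∑ x ∈ s, sl2Act d₀ γ k (F x) := by
  classical
  induction s using Finset.induction_on with
  | empty => simp [sl2Act_zero]
  | insert _ _ hx ih =>
    rw [Finset.sum_insert hx, Finset.sum_insert hx, sl2Act_add, ih]

lemma sl2Act_X_pow_mul (e : ℕ) (g : MvPolynomial (Fin n) R) (hg : Indep k g) :
    sl2Act d₀ γ k (X k ^ e * g) =
      (C (γ 0 0) * X k + C (γ 0 1)) ^ e *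
        (C (γ 1 0) * X k + C (γ 1 1)) ^ (d₀ - e) * g := by
  conv_lhs => rw [g.as_sum]
  rw [Finset.mul_sum, sl2Act_sum]
  conv_rhs => rw [g.as_sum, Finset.mul_sum]
  refine Finset.sum_congr rfl fun m hm => ?_
  rw [X_pow_eq_monomial, monomial_mul, one_mul, sl2Act_monomial]
  have h1 : (Finsupp.single k e + m).erase k = m := by
    ext t
    rcases eq_or_ne t k with rfl | ht
    · rw [Finsupp.erase_same, hg m hm]
    · rw [Finsupp.erase_ne ht]
      rw [Finsupp.add_apply, Finsupp.single_eq_of_ne' (Ne.symm ht), zero_add]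
  have h2 : ((Finsupp.single k e + m : Fin n →₀ ℕ)) k = e := by
    rw [Finsupp.add_apply, Finsupp.single_eq_same, hg m hm, add_zero]
  rw [h1, h2]
  ring

end SL2

lemma rayleigh_key1 (i j : Fin n) (hij : i ≠ j) (a b c d : R)
    (hdet : a * d - b * c = 1) (g h : MvPolynomial (Fin n) R)
    (hgi : pderiv i g = 0) (hhi : pderiv i h = 0)
    (hgij : pderiv i (pderiv j g) = 0) (hhij : pderiv i (pderiv j h) = 0) :
    Rayleigh i j ((C a * X i + C b) * g + (C c * X i + C d) * h) =
      Rayleigh i j (X i * g + h) := by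
  have hC : (C a * C d - C b * C c : MvPolynomial (Fin n) R) = 1 := by
    rw [← C_mul, ← C_mul, ← C_sub, hdet, C_1]
  simp only [Rayleigh, map_add, pderiv_mul, pderiv_C_mul, pderiv_X_self, pderiv_C,
    pderiv_X_of_ne hij, hgi, hhi, hgij, hhij, mul_one, mul_zero, zero_mul, add_zero,
    zero_add, map_zero]
  linear_combination (g * pderiv j h - h * pderiv j g) * hC

lemma rayleigh_key2 (i j k : Fin n) (hki : k ≠ i) (hkj : k ≠ j) (a b c d : R)
    (g h : MvPolynomial (Fin n) R) :
    Rayleigh i j ((C a * X k + C b) * g + (C c * X k + C d) * h) =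
      (C a * X k + C b) ^ 2 * Rayleigh i j g +
        (C a * X k + C b) * (C c * X k + C d) *
          (pderiv i g * pderiv j h + pderiv i h * pderiv j g -
            g * pderiv i (pderiv j h) - h * pderiv i (pderiv j g)) +
        (C c * X k + C d) ^ 2 * Rayleigh i j h := by
  simp only [Rayleigh, map_add, pderiv_mul, pderiv_C_mul, pderiv_C,
    pderiv_X_of_ne hki, pderiv_X_of_ne hkj, mul_one, mul_zero, zero_mul, add_zero,
    zero_add, map_zero]
  ring

lemma rayleigh_key2' (i j k : Fin n) (hki : k ≠ i) (hkj : k ≠ j)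
    (g h : MvPolynomial (Fin n) R) :
    Rayleigh i j (X k * g + h) =
      X k ^ 2 * Rayleigh i j g +
        X k *
          (pderiv i g * pderiv j h + pderiv i h * pderiv j g -
            g * pderiv i (pderiv j h) - h * pderiv i (pderiv j g)) +
        Rayleigh i j h := by
  simp only [Rayleigh, map_add, pderiv_mul, pderiv_C,
    pderiv_X_of_ne hki, pderiv_X_of_ne hkj, mul_one, mul_zero, zero_mul, add_zero,
    zero_add, map_zero]
  ring

lemma rayleigh_symm (i j : Fin n) (f : MvPolynomial (Fin n) R) :
    Rayleigh i j f = Rayleigh j i f := by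
  unfold Rayleigh
  rw [pderiv_comm']
  ring

end Aux

/-- for `f` multiaffine and `γ ∈ SL₂(R)` acting on the variable
`x_k`: if `k ∈ {i,j}` then `Δ_ij(γ·f) = Δ_ij(f)`, and if `k ∉ {i,j}` then
`Δ_ij(γ·f) = γ·Δ_ij(f)`, where `γ` acts on `Δ_ij(f)` as a polynomial of
degree ≤ 2 in `x_k`. -/
theorem stmt7 {R : Type*} [CommRing R] {n : ℕ}
    (γ : Matrix.SpecialLinearGroup (Fin 2) R) (k i j : Fin n) (hij : i ≠ j)
    (f : MvPolynomial (Fin n) R) (hma : ∀ t, f.degreeOf t ≤ 1) :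
    ((k = i ∨ k = j) →
      Rayleigh i j (sl2Act 1 (γ : Matrix (Fin 2) (Fin 2) R) k f) = Rayleigh i j f) ∧
    (k ≠ i → k ≠ j →
      Rayleigh i j (sl2Act 1 (γ : Matrix (Fin 2) (Fin 2) R) k f) =
        sl2Act 2 (γ : Matrix (Fin 2) (Fin 2) R) k (Rayleigh i j f)) := by
  set M : Matrix (Fin 2) (Fin 2) R := (γ : Matrix (Fin 2) (Fin 2) R) with hM
  have hdet : M 0 0 * M 1 1 - M 0 1 * M 1 0 = 1 := by
    have := γ.prop
    rw [Matrix.det_fin_two] at this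
    exact this
  set g : MvPolynomial (Fin n) R := pderiv k f with hgdef
  set h : MvPolynomial (Fin n) R := f - X k * g with hhdef
  have hg : Indep k g := indep_pderiv_self (hma k)
  have hh : Indep k h := indep_remainder (hma k)
  have hfd : f = X k * g + h := by rw [hhdef]; ring
  have hact : sl2Act 1 M k f =
      (C (M 0 0) * X k + C (M 0 1)) * g + (C (M 1 0) * X k + C (M 1 1)) * h := by
    conv_lhs => rw [hfd]
    have e1 : X k * g = X k ^ 1 * g := by rw [pow_one]
    have e2 : h = X k ^ 0 * h := by rw [pow_zero, one_mul]
    rw [e1, sl2Act_add, sl2Act_X_pow_mul _ _ _ _ _ hg]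
    conv_lhs => rw [e2]
    rw [sl2Act_X_pow_mul _ _ _ _ _ hh]
    simp [pow_one, pow_zero]
  constructor
  · -- k = i or k = j
    rintro (rfl | rfl)
    · rw [hact, hfd]
      exact rayleigh_key1 k j hij _ _ _ _ hdet g h hg.pderiv_self_eq_zero
        hh.pderiv_self_eq_zero (hg.pderiv (i := j)).pderiv_self_eq_zero
        (hh.pderiv (i := j)).pderiv_self_eq_zero
    · rw [rayleigh_symm, rayleigh_symm i k f, hact, hfd]
      exact rayleigh_key1 k i (Ne.symm hij) _ _ _ _ hdet g h hg.pderiv_self_eq_zero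
        hh.pderiv_self_eq_zero (hg.pderiv (i := i)).pderiv_self_eq_zero
        (hh.pderiv (i := i)).pderiv_self_eq_zero
  · -- k ≠ i and k ≠ j
    intro hki hkj
    rw [hact, rayleigh_key2 i j k hki hkj]
    conv_rhs => rw [hfd, rayleigh_key2' i j k hki hkj]
    have hΔg : Indep k (Rayleigh i j g) :=
      ((hg.pderiv).mul (hg.pderiv)).sub (hg.mul ((hg.pderiv).pderiv))
    have hΔh : Indep k (Rayleigh i j h) :=
      ((hh.pderiv).mul (hh.pderiv)).sub (hh.mul ((hh.pderiv).pderiv))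
    have hMM : Indep k (pderiv i g * pderiv j h + pderiv i h * pderiv j g -
        g * pderiv i (pderiv j h) - h * pderiv i (pderiv j g)) :=
      ((((hg.pderiv).mul (hh.pderiv)).add ((hh.pderiv).mul (hg.pderiv))).sub
        (hg.mul ((hh.pderiv).pderiv))).sub (hh.mul ((hg.pderiv).pderiv))
    have e1 : X k *
        (pderiv i g * pderiv j h + pderiv i h * pderiv j g -
          g * pderiv i (pderiv j h) - h * pderiv i (pderiv j g)) =
        X k ^ 1 * (pderiv i g * pderiv j h + pderiv i h * pderiv j g -
          g * pderiv i (pderiv j h) - h * pderiv i (pderiv j g)) := by rw [pow_one]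
    have e2 : Rayleigh i j h = X k ^ 0 * Rayleigh i j h := by rw [pow_zero, one_mul]
    rw [sl2Act_add, sl2Act_add, sl2Act_X_pow_mul _ _ _ _ _ hΔg]
    conv_rhs => rw [e1, e2]
    rw [sl2Act_X_pow_mul _ _ _ _ _ hMM, sl2Act_X_pow_mul _ _ _ _ _ hΔh]
    ring
end

section
/- Let R be a UFD of characteristic ≠ 2 and g = a x² + b x + c ∈ R[x]. Then g factors into two linear (degree ≤ 1) factors in R[x] if and only if the discriminant b² − 4ac is a square in R. -/
open Polynomial

/-- Cancel a nonzero constant from a factorization in a UFD polynomial ring. -/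
lemma stmt8_cancel_const {R : Type*} [CommRing R] [IsDomain R]
    [UniqueFactorizationMonoid R] (r : R) :
    r ≠ 0 → ∀ p q s : Polynomial R, C r * s = p * q →
      ∃ p' q' : Polynomial R, s = p' * q' ∧ p'.degree ≤ p.degree ∧
        q'.degree ≤ q.degree := by
  refine UniqueFactorizationMonoid.induction_on_prime r ?_ ?_ ?_
  · intro h
    exact absurd rfl h
  · intro x hx _ p q s h
    obtain ⟨u, rfl⟩ := hx
    refine ⟨C ((u⁻¹ : Rˣ) : R) * p, q, ?_, ?_, le_refl _⟩
    · have hs : s = C ((u⁻¹ : Rˣ) : R) * (C ((u : Rˣ) : R) * s) := by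
        rw [← mul_assoc, ← C_mul, Units.inv_mul, C_1, one_mul]
      rw [hs, h, mul_assoc]
    · calc (C ((u⁻¹ : Rˣ) : R) * p).degree ≤ _ := degree_mul_le _ _
        _ ≤ 0 + p.degree := add_le_add degree_C_le le_rfl
        _ = p.degree := zero_add _
  · intro x π hx hπ ih _ p q s h
    have hπ0 : (C π : Polynomial R) ≠ 0 := by
      simpa using hπ.ne_zero
    have hdvd : (C π : Polynomial R) ∣ p * q := by
      refine ⟨C x * s, ?_⟩
      rw [← h, C_mul]
      ring
    have hCπ : Prime (C π : Polynomial R) := Polynomial.prime_C_iff.mpr hπ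
    rcases hCπ.2.2 _ _ hdvd with ⟨p₁, rfl⟩ | ⟨q₁, rfl⟩
    · have h' : C x * s = p₁ * q := by
        apply mul_left_cancel₀ hπ0
        rw [← mul_assoc, ← C_mul, h]
        ring
      obtain ⟨p', q', hs, hp, hq⟩ := ih hx p₁ q s h'
      refine ⟨p', q', hs, ?_, hq⟩
      rw [degree_mul, degree_C hπ.ne_zero, zero_add]
      exact hp
    · have h' : C x * s = p * q₁ := by
        apply mul_left_cancel₀ hπ0
        rw [← mul_assoc, ← C_mul, h]
        ring
      obtain ⟨p', q', hs, hp, hq⟩ := ih hx p q₁ s h'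
      refine ⟨p', q', hs, hp, ?_⟩
      rw [degree_mul, degree_C hπ.ne_zero, zero_add]
      exact hq

/-- over a UFD of characteristic ≠ 2, the quadratic `a x² + b x + c`
factors into two factors of degree ≤ 1 iff the discriminant `b² − 4ac` is a
square. -/
theorem stmt8 {R : Type*} [CommRing R] [IsDomain R] [UniqueFactorizationMonoid R]
    (h2 : (2 : R) ≠ 0) (a b c : R) :
    (∃ p q : Polynomial R, p.degree ≤ 1 ∧ q.degree ≤ 1 ∧
        (C a * X ^ 2 + C b * X + C c : Polynomial R) = p * q) ↔
      IsSquare (b ^ 2 - 4 * a * c) := by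
  constructor
  · rintro ⟨p, q, hp, hq, h⟩
    rw [eq_X_add_C_of_degree_le_one hp, eq_X_add_C_of_degree_le_one hq] at h
    set p₁ := p.coeff 1; set p₀ := p.coeff 0
    set q₁ := q.coeff 1; set q₀ := q.coeff 0
    have h' : C a * X ^ 2 + C b * X + C c =
        C (p₁ * q₁) * X ^ 2 + C (p₁ * q₀ + p₀ * q₁) * X + C (p₀ * q₀) := by
      rw [h]
      simp only [C_mul, C_add]
      ring
    have e2 : a = p₁ * q₁ := by
      have := congrArg (fun f => Polynomial.coeff f 2) h'
      simpa [coeff_X_pow, -map_mul, -map_add] using this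
    have e1 : b = p₁ * q₀ + p₀ * q₁ := by
      have := congrArg (fun f => Polynomial.coeff f 1) h'
      simpa [coeff_X_pow, -map_mul, -map_add] using this
    have e0 : c = p₀ * q₀ := by
      have := congrArg (fun f => Polynomial.coeff f 0) h'
      simpa [coeff_X_pow, -map_mul, -map_add] using this
    exact ⟨p₁ * q₀ - p₀ * q₁, by rw [e2, e1, e0]; ring⟩
  · rintro ⟨d, hd⟩
    by_cases ha : a = 0
    · refine ⟨C b * X + C c, 1, degree_linear_le, ?_, ?_⟩
      · exact degree_one.le.trans (by norm_num)
      · rw [ha]; simp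
    · have hr : (2 * 2 * a : R) ≠ 0 := mul_ne_zero (mul_ne_zero h2 h2) ha
      have key : C (2 * 2 * a) * (C a * X ^ 2 + C b * X + C c) =
          (C (2 * a) * X + C (b + d)) * (C (2 * a) * X + C (b - d)) := by
        have hdC : (C d * C d : Polynomial R) =
            C b * C b - 4 * (C a * C c) := by
          have h' := congrArg C hd
          simp only [C_sub, C_mul, C_pow, map_ofNat] at h'
          linear_combination -h'
        simp only [C_mul, C_add, C_sub, map_ofNat]
        linear_combination hdC
      obtain ⟨p', q', hs, hp, hq⟩ :=
        stmt8_cancel_const (2 * 2 * a) hr _ _ _ key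
      exact ⟨p', q', hp.trans degree_linear_le, hq.trans degree_linear_le, hs⟩
end

section
/- Let R be an integral domain (of characteristic ≠ 2) and h(x) = b₄x⁴ + b₃x³ + b₂x² + b₁x + b₀ ∈ R[x]. Then h is a square in R[x] if and only if b₀, b₄, and h(1) = b₀+b₁+b₂+b₃+b₄ are squares in R and the following five equations hold: b₄b₁² − b₃²b₀ = 0; b₃³ − 4b₄b₃b₂ + 8b₄²b₁ = 0; b₁³ − 4b₀b₁b₂ + 8b₀²b₃ = 0; b₂b₃² − 4b₂²b₄ + 2b₁b₃b₄ + 16b₀b₄² = 0; b₁²b₂ − 4b₀b₂² + 2b₀b₁b₃ + 16b₀²b₄ = 0. -/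
open Polynomial

private lemma quartic_coeffs_eq {R : Type*} [CommRing R] {b0 b1 b2 b3 b4 c0 c1 c2 c3 c4 : R}
    (h : (C b4 * X ^ 4 + C b3 * X ^ 3 + C b2 * X ^ 2 + C b1 * X + C b0 : Polynomial R) =
         C c4 * X ^ 4 + C c3 * X ^ 3 + C c2 * X ^ 2 + C c1 * X + C c0) :
    b0 = c0 ∧ b1 = c1 ∧ b2 = c2 ∧ b3 = c3 ∧ b4 = c4 := by
  refine ⟨?_, ?_, ?_, ?_, ?_⟩
  · simpa using congrArg (fun p => Polynomial.coeff p 0) h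
  · simpa using congrArg (fun p => Polynomial.coeff p 1) h
  · simpa using congrArg (fun p => Polynomial.coeff p 2) h
  · simpa using congrArg (fun p => Polynomial.coeff p 3) h
  · simpa using congrArg (fun p => Polynomial.coeff p 4) h

private lemma quartic_sq_iff {R : Type*} [CommRing R] (b0 b1 b2 b3 b4 α β δ : R) :
    ((C b4 * X ^ 4 + C b3 * X ^ 3 + C b2 * X ^ 2 + C b1 * X + C b0 : Polynomial R) =
        (C α * X ^ 2 + C β * X + C δ) ^ 2) ↔
      (b4 = α ^ 2 ∧ b3 = 2 * α * β ∧ b2 = β ^ 2 + 2 * α * δ ∧ b1 = 2 * β * δ ∧ b0 = δ ^ 2) := by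
  have hexp : ((C α * X ^ 2 + C β * X + C δ : Polynomial R)) ^ 2 =
      C (α^2) * X ^ 4 + C (2*α*β) * X ^ 3 + C (β^2+2*α*δ) * X ^ 2 + C (2*β*δ) * X + C (δ^2) := by
    simp only [C_add, C_mul, C_pow, map_ofNat]
    ring
  rw [hexp]
  constructor
  · intro h
    obtain ⟨h0, h1, h2, h3, h4⟩ := quartic_coeffs_eq h
    exact ⟨h4, h3, h2, h1, h0⟩
  · rintro ⟨h4, h3, h2, h1, h0⟩
    rw [h4, h3, h2, h1, h0]

/-- a quartic `b₄x⁴ + b₃x³ + b₂x² + b₁x + b₀` over an integral domain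
of characteristic ≠ 2 is the square of a quadratic iff `b₀`, `b₄` and `h(1)` are
squares and the five listed cubic equations hold. -/
theorem stmt9 {R : Type*} [CommRing R] [IsDomain R] (h2 : (2 : R) ≠ 0)
    (b0 b1 b2 b3 b4 : R) :
    (∃ α β δ : R,
        (C b4 * X ^ 4 + C b3 * X ^ 3 + C b2 * X ^ 2 + C b1 * X + C b0 : Polynomial R) =
          (C α * X ^ 2 + C β * X + C δ) ^ 2) ↔
      (IsSquare b0 ∧ IsSquare b4 ∧ IsSquare (b0 + b1 + b2 + b3 + b4) ∧
        b4 * b1 ^ 2 - b3 ^ 2 * b0 = 0 ∧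
        b3 ^ 3 - 4 * b4 * b3 * b2 + 8 * b4 ^ 2 * b1 = 0 ∧
        b1 ^ 3 - 4 * b0 * b1 * b2 + 8 * b0 ^ 2 * b3 = 0 ∧
        b2 * b3 ^ 2 - 4 * b2 ^ 2 * b4 + 2 * b1 * b3 * b4 + 16 * b0 * b4 ^ 2 = 0 ∧
        b1 ^ 2 * b2 - 4 * b0 * b2 ^ 2 + 2 * b0 * b1 * b3 + 16 * b0 ^ 2 * b4 = 0) := by
  constructor
  · rintro ⟨α, β, δ, hpoly⟩
    obtain ⟨h4, h3, hb2, h1, h0⟩ := (quartic_sq_iff b0 b1 b2 b3 b4 α β δ).mp hpoly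
    subst h4 h3 hb2 h1 h0
    refine ⟨⟨δ, by ring⟩, ⟨α, by ring⟩, ⟨α + β + δ, by ring⟩, by ring, by ring, by ring,
      by ring, by ring⟩
  · rintro ⟨⟨d, hd⟩, ⟨a, ha⟩, ⟨s, hs⟩, e1, e2, e3, e4, e5⟩
    subst hd ha
    by_cases haz : a = 0
    · -- b4 = 0 case
      subst haz
      have hb3 : b3 = 0 := by
        have : b3 ^ 3 = 0 := by linear_combination e2
        exact pow_eq_zero_iff (by norm_num) |>.mp this
      by_cases hdz : d = 0
      · subst hdz
        have hb1 : b1 = 0 := by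
          have : b1 ^ 3 = 0 := by linear_combination e3
          exact pow_eq_zero_iff (by norm_num) |>.mp this
        refine ⟨0, s, 0, (quartic_sq_iff _ _ _ _ _ _ _ _).mpr ⟨by ring, by rw [hb3]; ring,
          by linear_combination hs - hb3 - hb1, by rw [hb1]; ring, by ring⟩⟩
      · -- d ≠ 0
        have hQ : b1 ^ 2 - 4 * (d * d) * b2 = 0 := by
          have h3' : b1 * (b1 ^ 2 - 4 * (d * d) * b2) = 0 := by linear_combination e3 - 8*(d*d)^2*hb3
          have h5' : b2 * (b1 ^ 2 - 4 * (d * d) * b2) = 0 := by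
            linear_combination e5 - 2*(d*d)*b1*hb3
          rcases mul_eq_zero.mp h3' with h | h
          · rcases mul_eq_zero.mp h5' with h' | h'
            · rw [h, h']; ring
            · exact h'
          · exact h
        have hP : (2 * d * (s - d) - b1) * (2 * d * (-s - d) - b1) = 0 := by
          linear_combination hQ + 4*d^2*hs - 4*d^2*hb3
        have hβ : ∃ β : R, 2 * d * β = b1 := by
          rcases mul_eq_zero.mp hP with h | h
          · exact ⟨s - d, by linear_combination h⟩
          · exact ⟨-s - d, by linear_combination h⟩
        obtain ⟨β, hβ⟩ := hβ
        have hb2' : b2 = β ^ 2 := by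
          have h4d : (2 * d) * (2 * d) ≠ 0 := mul_ne_zero (mul_ne_zero h2 hdz) (mul_ne_zero h2 hdz)
          apply mul_left_cancel₀ h4d
          linear_combination -hQ - (2*d*β + b1) * hβ
        exact ⟨0, β, d, (quartic_sq_iff _ _ _ _ _ _ _ _).mpr ⟨by ring, by rw [hb3]; ring,
          by rw [hb2']; ring, by linear_combination -hβ, by ring⟩⟩
    · -- a ≠ 0 case
      have h2a : (2 : R) * a ≠ 0 := mul_ne_zero h2 haz
      have key : (b3 ^ 2 - 4 * a ^ 2 * b2 + 8 * d * a ^ 3) *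
          (b3 ^ 2 - 4 * a ^ 2 * b2 - 8 * d * a ^ 3) = 0 := by
        linear_combination b3 * e2 - 4 * a ^ 2 * e4
      have he : ∃ e : R, e * e = d * d ∧ b3 ^ 2 - 4 * a ^ 2 * b2 + 8 * e * a ^ 3 = 0 := by
        rcases mul_eq_zero.mp key with h | h
        · exact ⟨d, rfl, h⟩
        · exact ⟨-d, by ring, by linear_combination h⟩
      obtain ⟨e, he2, hE⟩ := he
      have hab : a * b1 - e * b3 = 0 := by
        have h8 : ((2 * a) ^ 3) * (a * b1 - e * b3) = 0 := by
          linear_combination e2 - b3 * hE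
        exact (mul_eq_zero.mp h8).resolve_left (pow_ne_zero 3 h2a)
      have hT : (2 * a * (s - a - e) - b3) * (2 * a * (-s - a - e) - b3) = 0 := by
        linear_combination 4 * a ^ 2 * hs + 4 * a ^ 2 * he2 + hE - 4 * a * hab
      have hβ : ∃ β : R, 2 * a * β = b3 := by
        rcases mul_eq_zero.mp hT with h | h
        · exact ⟨s - a - e, by linear_combination h⟩
        · exact ⟨-s - a - e, by linear_combination h⟩
      obtain ⟨β, hβ⟩ := hβ
      refine ⟨a, β, e, (quartic_sq_iff _ _ _ _ _ _ _ _).mpr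
        ⟨by ring, hβ.symm, ?_, ?_, by linear_combination -he2⟩⟩
      · apply mul_left_cancel₀ (mul_ne_zero h2a h2a)
        linear_combination -hE - (2*a*β + b3) * hβ
      · apply mul_left_cancel₀ h2a
        linear_combination 2 * hab - 2 * e * hβ
end

section
/- Let S be a UFD of characteristic ≠ 2 with an automorphic involution a ↦ ā, and let R be the fixed subring. A polynomial g = ax² + bx + c ∈ R[x] is a Hermitian square in S[x] (i.e., g = p·p̄ for some p ∈ S[x] of degree ≤ 1) if and only if a and c are Hermitian squares in S and the discriminant b² − 4ac equals q² for some q ∈ S with q̄ = −q. -/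
open Polynomial

private lemma stmt10_quad_coeffs {S : Type*} [CommRing S] (a b c a' b' c' : S)
    (heq : (C a * X ^ 2 + C b * X + C c : Polynomial S) = C a' * X ^ 2 + C b' * X + C c') :
    a = a' ∧ b = b' ∧ c = c' := by
  refine ⟨?_, ?_, ?_⟩
  · have := congrArg (fun f => Polynomial.coeff f 2) heq
    simpa [coeff_add, coeff_C_mul, coeff_X_pow, coeff_X, coeff_C] using this
  · have := congrArg (fun f => Polynomial.coeff f 1) heq
    simpa [coeff_add, coeff_C_mul, coeff_X_pow, coeff_X, coeff_C] using this
  · have := congrArg (fun f => Polynomial.coeff f 0) heq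
    simpa [coeff_add, coeff_C_mul, coeff_X_pow, coeff_X, coeff_C] using this

private lemma stmt10_key {S : Type*} [CommRing S] [IsDomain S]
    [UniqueFactorizationMonoid S] (σ : S →+* S) (hinv : Function.Involutive σ)
    (s : S) : ∀ t w : S, w * σ w = (s * σ s) * (t * σ t) →
      ∃ u v : S, u * σ u = s * σ s ∧ v * σ v = t * σ t ∧ u * σ v = w := by
  induction s using UniqueFactorizationMonoid.induction_on_prime with
  | h₁ =>
    intro t w h
    simp only [map_zero, zero_mul] at h
    rcases mul_eq_zero.mp h with hw | hw
    · exact ⟨0, t, by simp, rfl, by simp [hw]⟩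
    · have hw' : w = 0 := by
        have := congrArg σ hw
        rwa [hinv w, map_zero] at this
      exact ⟨0, t, by simp, rfl, by simp [hw']⟩
  | h₂ x hx =>
    intro t w h
    obtain ⟨xu, rfl⟩ := hx
    set x : S := (xu : S)
    set y : S := ((xu⁻¹ : Sˣ) : S)
    have hxy : x * y = 1 := Units.mul_inv xu
    refine ⟨x, σ w * σ y, ?_, ?_, ?_⟩
    · rfl
    · have h1 : (x * σ x) * (y * σ y) = 1 := by
        have hσ : σ x * σ y = 1 := by
          have := congrArg σ hxy
          rwa [map_mul, map_one] at this
        calc (x * σ x) * (y * σ y) = (x * y) * (σ x * σ y) := by ring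
        _ = 1 := by rw [hxy, hσ, one_mul]
      calc (σ w * σ y) * σ (σ w * σ y) = (w * σ w) * (y * σ y) := by
            rw [map_mul, hinv w, hinv y]; ring
        _ = ((x * σ x) * (t * σ t)) * (y * σ y) := by rw [h]
        _ = (t * σ t) * ((x * σ x) * (y * σ y)) := by ring
        _ = t * σ t := by rw [h1, mul_one]
    · calc x * σ (σ w * σ y) = (x * y) * w := by rw [map_mul, hinv w, hinv y]; ring
        _ = w := by rw [hxy, one_mul]
  | h₃ s₁ π hs₁ hπ ih =>
    intro t w h
    have hπ0 : π ≠ 0 := hπ.ne_zero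
    have hσπ0 : σ π ≠ 0 := fun h0 => hπ0 (by rw [← hinv π, h0, map_zero])
    have hdvd : π ∣ w * σ w := ⟨σ π * (s₁ * σ s₁) * (t * σ t), by rw [h, map_mul]; ring⟩
    rcases hπ.2.2 w (σ w) hdvd with hw | hw
    · obtain ⟨w₁, rfl⟩ := hw
      have hcan : w₁ * σ w₁ = (s₁ * σ s₁) * (t * σ t) := by
        apply mul_left_cancel₀ (mul_ne_zero hπ0 hσπ0)
        calc (π * σ π) * (w₁ * σ w₁) = (π * w₁) * σ (π * w₁) := by
              rw [map_mul]; ring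
          _ = ((π * s₁) * σ (π * s₁)) * (t * σ t) := h
          _ = (π * σ π) * ((s₁ * σ s₁) * (t * σ t)) := by rw [map_mul]; ring
      obtain ⟨u₁, v, hu, hv, huv⟩ := ih t w₁ hcan
      refine ⟨π * u₁, v, ?_, hv, by rw [mul_assoc, huv]⟩
      rw [map_mul, map_mul]
      linear_combination (π * σ π) * hu
    · obtain ⟨k, hk⟩ := hw
      have hwk : w = σ π * σ k := by
        have := congrArg σ hk
        rwa [hinv w, map_mul] at this
      set w₁ : S := σ k with hw₁
      have hcan : w₁ * σ w₁ = (s₁ * σ s₁) * (t * σ t) := by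
        apply mul_left_cancel₀ (mul_ne_zero hπ0 hσπ0)
        calc (π * σ π) * (w₁ * σ w₁) = (σ π * w₁) * σ (σ π * w₁) := by
              rw [map_mul, hinv π]; ring
          _ = w * σ w := by rw [hwk]
          _ = ((π * s₁) * σ (π * s₁)) * (t * σ t) := h
          _ = (π * σ π) * ((s₁ * σ s₁) * (t * σ t)) := by rw [map_mul]; ring
      obtain ⟨u₁, v, hu, hv, huv⟩ := ih t w₁ hcan
      refine ⟨σ π * u₁, v, ?_, hv, by rw [mul_assoc, huv, hwk]⟩
      rw [map_mul, map_mul, hinv π]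
      linear_combination (π * σ π) * hu

/-- over a UFD `S` of characteristic ≠ 2 with an involution `σ`
fixing `a`, `b`, `c`, the quadratic `a x² + b x + c` is a Hermitian square
`p·p̄` (with `p` of degree ≤ 1) iff `a` and `c` are Hermitian squares in `S`
and `b² − 4ac = q²` for some `q` with `σ q = −q`. -/
theorem stmt10 {S : Type*} [CommRing S] [IsDomain S] [UniqueFactorizationMonoid S]
    (h2 : (2 : S) ≠ 0) (σ : S →+* S) (hinv : Function.Involutive σ)
    (a b c : S) (ha : σ a = a) (hb : σ b = b) (hc : σ c = c) :
    (∃ p : Polynomial S, p.degree ≤ 1 ∧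
        (C a * X ^ 2 + C b * X + C c : Polynomial S) = p * p.map σ) ↔
      ((∃ s : S, a = s * σ s) ∧ (∃ t : S, c = t * σ t) ∧
        ∃ q : S, b ^ 2 - 4 * a * c = q ^ 2 ∧ σ q = -q) := by
  constructor
  · rintro ⟨p, hdeg, heq⟩
    set u := p.coeff 1
    set v := p.coeff 0
    have hp : p = C u * X + C v := p.eq_X_add_C_of_degree_le_one hdeg
    rw [hp] at heq
    have hmap : (C u * X + C v : Polynomial S).map σ = C (σ u) * X + C (σ v) := by
      simp
    rw [hmap] at heq
    have hexp : (C u * X + C v) * (C (σ u) * X + C (σ v)) =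
        C (u * σ u) * X ^ 2 + C (u * σ v + v * σ u) * X + C (v * σ v) := by
      simp only [C_add, C_mul]; ring
    rw [hexp] at heq
    obtain ⟨ea, eb, ec⟩ := stmt10_quad_coeffs _ _ _ _ _ _ heq
    refine ⟨⟨u, ea⟩, ⟨v, ec⟩, u * σ v - v * σ u, ?_, ?_⟩
    · rw [ea, eb, ec]; ring
    · rw [map_sub, map_mul, map_mul, hinv u, hinv v]; ring
  · rintro ⟨⟨s, hs⟩, ⟨t, ht⟩, q, hq, hq2⟩
    -- First produce `w` with `2 * w = b + q` using integral closedness.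
    set K := FractionRing S
    have halg : Function.Injective (algebraMap S K) := IsFractionRing.injective S K
    have h2K : (algebraMap S K) 2 ≠ 0 := fun h0 => h2 (halg (by rw [h0, map_zero]))
    set x : K := algebraMap S K (b + q) / algebraMap S K 2 with hxdef
    have hx2 : algebraMap S K 2 * x = algebraMap S K (b + q) := by
      rw [hxdef, mul_div_cancel₀ _ h2K]
    have hSrel : (b + q) ^ 2 - b * (b + q) * 2 + a * c * 2 ^ 2 = 0 := by
      linear_combination -hq
    have hx : IsIntegral S x := by
      refine ⟨X ^ 2 - C b * X + C (a * c), ?_, ?_⟩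
      · have hdeg : (C (-b) * X + C (a * c) : Polynomial S).degree
            < (X ^ 2 : Polynomial S).degree := by
          rw [degree_X_pow]
          exact lt_of_le_of_lt (degree_linear_le) (by norm_num)
        have hform : (X ^ 2 - C b * X + C (a * c) : Polynomial S)
            = X ^ 2 + (C (-b) * X + C (a * c)) := by rw [C_neg]; ring
        rw [hform]
        exact (Polynomial.monic_X_pow 2).add_of_left hdeg
      · simp only [eval₂_add, eval₂_sub, eval₂_mul, eval₂_pow, eval₂_X, eval₂_C]
        have hmain : (algebraMap S K 2) ^ 2 *
            (x ^ 2 - algebraMap S K b * x + algebraMap S K (a * c)) = 0 := by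
          calc (algebraMap S K 2) ^ 2 *
              (x ^ 2 - algebraMap S K b * x + algebraMap S K (a * c))
              = (algebraMap S K 2 * x) ^ 2
                - algebraMap S K b * (algebraMap S K 2 * x) * algebraMap S K 2
                + algebraMap S K (a * c) * (algebraMap S K 2) ^ 2 := by ring
            _ = algebraMap S K ((b + q) ^ 2 - b * (b + q) * 2 + a * c * 2 ^ 2) := by
                rw [hx2]
                simp only [map_add, map_sub, map_mul, map_pow]
            _ = 0 := by rw [hSrel, map_zero]
        have := mul_eq_zero.mp hmain
        rcases this with h0 | h0
        · exact absurd h0 (pow_ne_zero 2 h2K)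
        · exact h0
    obtain ⟨w, hw⟩ := IsIntegrallyClosed.isIntegral_iff.mp hx
    have hw2 : 2 * w = b + q := by
      apply halg
      rw [map_mul, hw]
      exact hx2
    have h2σ : σ (2 : S) = 2 := by
      have h21 : ((2 : S)) = (1 : S) + 1 := by norm_num
      rw [h21, map_add, map_one]
    have hσw2 : 2 * σ w = b - q := by
      have hcg := congrArg σ hw2
      rw [map_mul, map_add, hb, hq2, h2σ] at hcg
      rw [hcg]; ring
    have hww : w * σ w = (s * σ s) * (t * σ t) := by
      apply mul_left_cancel₀ (mul_ne_zero h2 h2)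
      calc (2 * 2) * (w * σ w) = (2 * w) * (2 * σ w) := by ring
        _ = (b + q) * (b - q) := by rw [hw2, hσw2]
        _ = (2 * 2) * ((s * σ s) * (t * σ t)) := by
            rw [← hs, ← ht]; linear_combination hq
    have hwsum : w + σ w = b := by
      apply mul_left_cancel₀ h2
      calc 2 * (w + σ w) = (2 * w) + (2 * σ w) := by ring
        _ = 2 * b := by rw [hw2, hσw2]; ring
    obtain ⟨u, v, hu, hv, huv⟩ := stmt10_key σ hinv s t w hww
    refine ⟨C u * X + C v, Polynomial.degree_linear_le, ?_⟩
    have hmap : (C u * X + C v : Polynomial S).map σ = C (σ u) * X + C (σ v) := by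
      simp
    rw [hmap]
    have evu : v * σ u = σ w := by
      have hcg := congrArg σ huv
      rw [map_mul, hinv v] at hcg
      rw [← hcg]; ring
    have ea : a = u * σ u := by rw [hs, ← hu]
    have ec : c = v * σ v := by rw [ht, ← hv]
    have eb : b = u * σ v + v * σ u := by rw [huv, evu, hwsum]
    rw [ea, eb, ec]
    simp only [C_add, C_mul]
    ring
end

section
/- Suppose g, h ∈ ℂ[x_1,...,x_m] are multiaffine in x_1,...,x_n, the coefficients ∂^{[n]}g := ∂ⁿg/∂x_1···∂x_n and ∂^{[n]}h are nonzero polynomials in x_{n+1},...,x_m of total degree at most one, the product g·h has real coefficients, and g·h is nonnegative as a function on ℝ^m. Then h = λ·ḡ for some real λ > 0, where ḡ denotes coefficient-wise complex conjugation. -/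
open MvPolynomial
open Complex

lemma lem_lin (d e : ℂ) (h : ∀ t : ℝ, ((d + t * e)).im = 0 ∧ 0 ≤ ((d + t * e)).re) :
    e = 0 := by
  have him : e.im = 0 := by
    have h0 := (h 0).1; have h1 := (h 1).1
    simp only [add_im, mul_im, ofReal_re, ofReal_im] at h0 h1
    push_cast at h0 h1; linarith
  have hre : e.re = 0 := by
    by_contra hne
    have h2 := (h (-(d.re + 1) / e.re)).2
    simp only [add_re, mul_re, ofReal_re, ofReal_im, zero_mul, sub_zero, him, mul_zero] at h2
    rw [div_mul_cancel₀ _ hne] at h2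
    linarith
  exact Complex.ext hre him

/-- Coefficient extraction for a pointwise-real, pointwise-nonnegative quadratic. -/
lemma lem_quad_aux (A B C : ℂ)
    (h : ∀ t : ℝ, ((A + t * B + t^2 * C)).im = 0 ∧ 0 ≤ ((A + t * B + t^2 * C)).re) :
    A.im = 0 ∧ B.im = 0 ∧ C.im = 0 ∧ 0 ≤ C.re ∧ B.re^2 - 4 * C.re * A.re ≤ 0 := by
  have h0 := (h 0).1
  have h1 := (h 1).1
  have h2 := (h (-1)).1
  simp only [add_im, mul_im, pow_two, mul_re, ofReal_re, ofReal_im] at h0 h1 h2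
  norm_num at h0 h1 h2
  have hA : A.im = 0 := h0
  have hB : B.im = 0 := by linarith
  have hC : C.im = 0 := by linarith
  have key : ∀ t : ℝ, 0 ≤ C.re * (t * t) + B.re * t + A.re := by
    intro t
    have h3 := (h t).2
    simp only [add_re, pow_two, mul_re, mul_im, ofReal_re, ofReal_im, hA, hB, hC] at h3
    norm_num at h3
    nlinarith [h3]
  refine ⟨hA, hB, hC, ?_, ?_⟩
  · by_contra hneg
    push_neg at hneg
    set t : ℝ := max 1 ((1 + |A.re| + |B.re|) / (-C.re)) with ht
    have h3 := key t
    have ht1 : (1:ℝ) ≤ t := le_max_left _ _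
    have ht2 : (1 + |A.re| + |B.re|) / (-C.re) ≤ t := le_max_right _ _
    have hcpos : (0:ℝ) < -C.re := by linarith
    have ht3 : 1 + |A.re| + |B.re| ≤ t * (-C.re) := by
      rw [div_le_iff₀ hcpos] at ht2; linarith
    nlinarith [le_abs_self A.re, le_abs_self B.re, neg_abs_le A.re, neg_abs_le B.re,
      mul_le_mul_of_nonneg_left ht3 (le_trans zero_le_one ht1), abs_nonneg B.re]
  · have := discrim_le_zero key
    rw [discrim] at this
    nlinarith [this]

lemma lem_quad (α β γ δ : ℂ) (hβ : β ≠ 0) (hδ : δ ≠ 0)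
    (h : ∀ t : ℝ, ((α + t * β) * (γ + t * δ)).im = 0 ∧ 0 ≤ ((α + t * β) * (γ + t * δ)).re) :
    γ * (starRingEnd ℂ) β = (starRingEnd ℂ) α * δ := by
  have hexp : ∀ t : ℝ, (α + t * β) * (γ + t * δ)
      = α * γ + t * (α * δ + β * γ) + t^2 * (β * δ) := by intro t; ring
  have H := lem_quad_aux (α * γ) (α * δ + β * γ) (β * δ) (by
    intro t; rw [← hexp t]; exact h t)
  obtain ⟨hA, hB, hC, hCpos, hdisc⟩ := H
  have hCne : β * δ ≠ 0 := mul_ne_zero hβ hδ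
  have hCre : 0 < (β * δ).re := by
    rcases lt_or_eq_of_le hCpos with h' | h'
    · exact h'
    · exfalso; exact hCne (Complex.ext h'.symm hC)
  set t₁ : ℂ := -α / β with ht₁
  set t₂ : ℂ := -γ / δ with ht₂
  have hsum : (t₁ + t₂) * (β * δ) = -(α * δ + β * γ) := by
    have e1 : t₁ * β = -α := by rw [ht₁]; exact div_mul_cancel₀ _ hβ
    have e2 : t₂ * δ = -γ := by rw [ht₂]; exact div_mul_cancel₀ _ hδ
    linear_combination δ * e1 + β * e2
  have hprod : t₁ * t₂ * (β * δ) = α * γ := by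
    have e1 : t₁ * β = -α := by rw [ht₁]; exact div_mul_cancel₀ _ hβ
    have e2 : t₂ * δ = -γ := by rw [ht₂]; exact div_mul_cancel₀ _ hδ
    linear_combination (t₂ * δ) * e1 + (-α) * e2
  have hCr : β * δ = ((β * δ).re : ℂ) := Complex.ext rfl hC
  have hBr : α * δ + β * γ = (((α * δ + β * γ).re : ℂ)) := Complex.ext rfl hB
  have hAr : α * γ = (((α * γ).re : ℂ)) := Complex.ext rfl hA
  set c : ℝ := (β * δ).re
  set b : ℝ := (α * δ + β * γ).re
  set a : ℝ := (α * γ).re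
  have hsumc : (t₁ + t₂) * (c : ℂ) = ((-b : ℝ) : ℂ) := by
    rw [← hCr, hsum, hBr]; push_cast; ring
  have hprodc : (t₁ * t₂) * (c : ℂ) = ((a : ℝ) : ℂ) := by
    rw [← hCr, hprod, hAr]
  have hsim : t₁.im + t₂.im = 0 := by
    have := congrArg Complex.im hsumc
    simp only [mul_im, add_im, add_re, ofReal_re, ofReal_im, mul_zero, add_zero] at this
    have h0 : (t₁.im + t₂.im) * c = 0 := by linarith
    rcases mul_eq_zero.mp h0 with h' | h'
    · exact h'
    · exact absurd h' (ne_of_gt hCre)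
  have hsre : (t₁.re + t₂.re) * c = -b := by
    have := congrArg Complex.re hsumc
    simp only [mul_re, add_im, add_re, ofReal_re, ofReal_im, mul_zero, sub_zero] at this
    linarith
  have hpim : t₁.re * t₂.im + t₁.im * t₂.re = 0 := by
    have := congrArg Complex.im hprodc
    simp only [mul_im, ofReal_re, ofReal_im, mul_zero, add_zero] at this
    have h0 : (t₁.re * t₂.im + t₁.im * t₂.re) * c = 0 := by linarith
    rcases mul_eq_zero.mp h0 with h' | h'
    · exact h'
    · exact absurd h' (ne_of_gt hCre)
  have hpre : (t₁.re * t₂.re - t₁.im * t₂.im) * c = a := by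
    have := congrArg Complex.re hprodc
    simp only [mul_re, mul_im, ofReal_re, ofReal_im, mul_zero, sub_zero] at this
    linarith
  have hineq : (t₁.re + t₂.re)^2 ≤ 4 * (t₁.re * t₂.re - t₁.im * t₂.im) := by
    have key : ((t₁.re + t₂.re)^2 - 4*(t₁.re * t₂.re - t₁.im * t₂.im)) * (c*c)
        = b^2 - 4*c*a := by
      linear_combination ((t₁.re + t₂.re)*c - b) * hsre - 4*c*hpre
    nlinarith [key, hdisc, mul_pos hCre hCre]
  have hconj : t₂ = (starRingEnd ℂ) t₁ := by
    have hy : t₂.im = -t₁.im := by linarith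
    have hx : t₂.re = t₁.re := by
      by_cases hy0 : t₁.im = 0
      · nlinarith [hineq, sq_nonneg (t₁.re - t₂.re)]
      · have h0 : t₁.im * (t₂.re - t₁.re) = 0 := by
          rw [hy] at hpim; ring_nf; ring_nf at hpim; linarith
        rcases mul_eq_zero.mp h0 with h' | h'
        · exact absurd h' hy0
        · linarith [sub_eq_zero.mp h']
    apply Complex.ext <;> simp [hx, hy]
  have hfin : -γ / δ = (starRingEnd ℂ) (-α / β) := by rw [← ht₁, ← ht₂, hconj]
  rw [map_div₀, map_neg] at hfin
  have hβc : (starRingEnd ℂ) β ≠ 0 := by simpa using hβ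
  field_simp at hfin
  linear_combination -hfin

section
variable {σ : Type*} [DecidableEq σ]

lemma lem_prod_update (j : σ) (m : σ →₀ ℕ) (hj : m j = 0) (x : σ → ℂ) (t : ℂ) :
    (m.prod fun i e => (Function.update x j t i) ^ e) = m.prod fun i e => x i ^ e := by
  apply Finsupp.prod_congr
  intro i hi
  rw [Function.update_of_ne]
  rintro rfl
  exact (Finsupp.mem_support_iff.mp hi) hj

lemma lem_eval_indep_monomial (j : σ) (m : σ →₀ ℕ) (c : ℂ) (hj : m j = 0) (x : σ → ℂ)
    (t : ℂ) : eval (Function.update x j t) (monomial m c) = eval x (monomial m c) := by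
  rw [eval_monomial, eval_monomial, lem_prod_update j m hj]

lemma lem_evalLin_monomial (j : σ) (m : σ →₀ ℕ) (c : ℂ) (hm : m j ≤ 1) (x : σ → ℂ) (t : ℂ) :
    eval (Function.update x j t) (monomial m c)
      = eval (Function.update x j 0) (monomial m c)
        + t * eval (Function.update x j 0) (pderiv j (monomial m c)) := by
  interval_cases h : m j
  · rw [pderiv_monomial, h, Nat.cast_zero, mul_zero, (monomial _).map_zero, map_zero, mul_zero,
      add_zero, lem_eval_indep_monomial j m c h, lem_eval_indep_monomial j m c h]
  · -- m j = 1
    have hm' : ((m - Finsupp.single j 1 : σ →₀ ℕ)) j = 0 := by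
      simp [Finsupp.tsub_apply, h]
    have hm2 : (m - Finsupp.single j 1) + Finsupp.single j 1 = m := by
      ext i
      by_cases hij : i = j
      · subst hij; simp [Finsupp.tsub_apply, h]
      · simp [Finsupp.tsub_apply, Finsupp.single_apply, Ne.symm hij]
    have hsplit : monomial m c = monomial (m - Finsupp.single j 1) c * X j := by
      conv_lhs => rw [← hm2]
      rw [monomial_add_single, pow_one]
    rw [pderiv_monomial, h, Nat.cast_one, mul_one]
    rw [hsplit, map_mul, map_mul, eval_X, eval_X, Function.update_self, Function.update_self,
      lem_eval_indep_monomial j _ c hm' x 0, lem_eval_indep_monomial j _ c hm' x t]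
    ring

lemma lem_eval_indep (j : σ) (q : MvPolynomial σ ℂ) (hq : degreeOf j q = 0) (x : σ → ℂ)
    (t : ℂ) : eval (Function.update x j t) q = eval x q := by
  conv_lhs => rw [as_sum q]
  conv_rhs => rw [as_sum q]
  rw [map_sum, map_sum]
  apply Finset.sum_congr rfl
  intro m hm
  exact lem_eval_indep_monomial j m _ (Nat.le_zero.mp (hq ▸ degreeOf_le_iff.mp le_rfl m hm)) x t

lemma lem_evalLin (j : σ) (g : MvPolynomial σ ℂ) (hg : degreeOf j g ≤ 1) (x : σ → ℂ) (t : ℂ) :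
    eval (Function.update x j t) g
      = eval (Function.update x j 0) g + t * eval (Function.update x j 0) (pderiv j g) := by
  conv_lhs => rw [as_sum g]
  conv_rhs => rw [as_sum g]
  rw [map_sum, map_sum, map_sum, map_sum, Finset.mul_sum, ← Finset.sum_add_distrib]
  apply Finset.sum_congr rfl
  intro m hm
  exact lem_evalLin_monomial j m _ (degreeOf_le_iff.mp hg m hm) x t

lemma lem_support_pderiv (j : σ) (g : MvPolynomial σ ℂ) (d : σ →₀ ℕ)
    (hd : d ∈ (pderiv j g).support) : ∃ m ∈ g.support, d = m - Finsupp.single j 1 := by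
  have : pderiv j g = ∑ m ∈ g.support, monomial (m - Finsupp.single j 1) (coeff m g * m j) := by
    conv_lhs => rw [as_sum g]
    rw [map_sum]
    apply Finset.sum_congr rfl
    intro m _
    rw [pderiv_monomial]
  rw [this] at hd
  have := MvPolynomial.support_sum hd
  rw [Finset.mem_biUnion] at this
  obtain ⟨m, hm, hdm⟩ := this
  refine ⟨m, hm, ?_⟩
  have := support_monomial_subset hdm
  simpa using this

lemma lem_degreeOf_pderiv_self (j : σ) (g : MvPolynomial σ ℂ) (hg : degreeOf j g ≤ 1) :
    degreeOf j (pderiv j g) = 0 := by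
  rw [← Nat.le_zero, degreeOf_le_iff]
  intro d hd
  obtain ⟨m, hm, rfl⟩ := lem_support_pderiv j g d hd
  have h1 : m j ≤ 1 := degreeOf_le_iff.mp hg m hm
  simp [Finsupp.tsub_apply, Finsupp.single_apply]
  omega

lemma lem_degreeOf_pderiv_ne (i j : σ) (hij : i ≠ j) (g : MvPolynomial σ ℂ) :
    degreeOf i (pderiv j g) ≤ degreeOf i g := by
  rw [degreeOf_le_iff]
  intro d hd
  obtain ⟨m, hm, rfl⟩ := lem_support_pderiv j g d hd
  have h1 : m i ≤ degreeOf i g := degreeOf_le_iff.mp le_rfl m hm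
  simp [Finsupp.tsub_apply, Finsupp.single_apply, Ne.symm hij]
  omega

lemma lem_eval_conj (g : MvPolynomial σ ℂ) (x : σ → ℂ) (hx : ∀ i, (starRingEnd ℂ) (x i) = x i) :
    eval x (MvPolynomial.map (starRingEnd ℂ) g) = (starRingEnd ℂ) (eval x g) := by
  rw [eval_map]
  have h1 : eval x g = eval₂ (RingHom.id ℂ) x g := by rw [eval₂_id]
  rw [h1, eval₂_comp_left (starRingEnd ℂ) (RingHom.id ℂ) x g]
  congr 1
  funext i
  exact (hx i).symm

lemma lem_eval_real_im (P : MvPolynomial σ ℂ) (hP : ∀ d, (coeff d P).im = 0) (p : σ → ℝ) :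
    (eval (fun i => (p i : ℂ)) P).im = 0 := by
  rw [eval_eq, Complex.im_sum]
  apply Finset.sum_eq_zero
  intro d _
  have : (∏ i ∈ d.support, ((p i : ℂ)) ^ d i) = ((∏ i ∈ d.support, (p i) ^ d i : ℝ) : ℂ) := by
    push_cast
    rfl
  rw [this, Complex.mul_im, hP d, Complex.ofReal_im, zero_mul, mul_zero, add_zero]

lemma lem_realcoeff_zero (F : MvPolynomial σ ℂ) (him : ∀ d, (coeff d F).im = 0)
    (hz : ∀ p : σ → ℝ, eval (fun i => (p i : ℂ)) F = 0) : F = 0 := by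
  classical
  set F' : MvPolynomial σ ℝ := ∑ d ∈ F.support, monomial d ((coeff d F).re) with hF'
  have hmap : MvPolynomial.map Complex.ofRealHom F' = F := by
    apply MvPolynomial.ext
    intro d
    rw [coeff_map, hF', coeff_sum]
    have : ∀ e ∈ F.support, coeff d (monomial e ((coeff e F).re))
        = if e = d then (coeff d F).re else 0 := by
      intro e _
      rw [coeff_monomial]
      by_cases h : e = d
      · subst h; simp
      · simp [h]
    rw [Finset.sum_congr rfl this, Finset.sum_ite_eq' F.support d]
    by_cases hd : d ∈ F.support
    · rw [if_pos hd]
      exact Complex.ext rfl (by simp [him d])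
    · rw [if_neg hd]
      have : coeff d F = 0 := notMem_support_iff.mp hd
      simp [this]
  have hz' : ∀ p : σ → ℝ, eval p F' = 0 := by
    intro p
    have h1 : Complex.ofRealHom (eval p F') = eval (fun i => (p i : ℂ)) F := by
      rw [← hmap, eval_map]
      have : eval p F' = eval₂ (RingHom.id ℝ) p F' := by rw [eval₂_id]
      rw [this, eval₂_comp_left Complex.ofRealHom (RingHom.id ℝ) p F']
      congr 1
    have h2 := hz p
    rw [← h1] at h2
    simpa using h2
  have : F' = 0 := by
    apply MvPolynomial.funext (q := 0)
    intro x
    rw [hz' x, map_zero]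
  rw [← hmap, this, map_zero]

lemma lem_density (F : MvPolynomial σ ℂ)
    (hz : ∀ p : σ → ℝ, eval (fun i => (p i : ℂ)) F = 0) : F = 0 := by
  set Fc := MvPolynomial.map (starRingEnd ℂ) F with hFc
  have hzc : ∀ p : σ → ℝ, eval (fun i => (p i : ℂ)) Fc = 0 := by
    intro p
    rw [hFc, lem_eval_conj F _ (fun i => Complex.conj_ofReal (p i)), hz p, map_zero]
  have hA : F + Fc = 0 := by
    apply lem_realcoeff_zero
    · intro d
      rw [coeff_add, hFc, coeff_map]
      simp
    · intro p
      rw [map_add, hz p, hzc p, add_zero]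
  have hB : C Complex.I * (F - Fc) = 0 := by
    apply lem_realcoeff_zero
    · intro d
      rw [coeff_C_mul, coeff_sub, hFc, coeff_map]
      simp
    · intro p
      rw [map_mul, map_sub, hz p, hzc p, sub_zero, mul_zero]
  have hFc0 : F - Fc = 0 := by
    have hI : (C Complex.I : MvPolynomial σ ℂ) ≠ 0 := by
      simp [MvPolynomial.C_eq_zero, Complex.I_ne_zero]
    exact (mul_eq_zero.mp hB).resolve_left hI
  have h2F : (2 : MvPolynomial σ ℂ) * F = 0 := by linear_combination hA + hFc0
  have h2 : (2 : MvPolynomial σ ℂ) ≠ 0 := by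
    intro h
    have h' := congrArg constantCoeff h
    rw [map_ofNat, map_zero] at h'
    norm_num at h'
  exact (mul_eq_zero.mp h2F).resolve_left h2

lemma lem_classify (d : σ →₀ ℕ) (hd : (d.sum fun _ e => e) ≤ 1) :
    d = 0 ∨ ∃ i, d = Finsupp.single i 1 := by
  by_cases h0 : d = 0
  · exact Or.inl h0
  right
  have hsum : (d.sum fun _ e => e) = ∑ a ∈ d.support, d a := rfl
  have hcard : d.support.card ≤ ∑ a ∈ d.support, d a := by
    rw [Finset.card_eq_sum_ones]
    apply Finset.sum_le_sum
    intro a ha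
    exact Nat.one_le_iff_ne_zero.mpr (Finsupp.mem_support_iff.mp ha)
  have hne : d.support.Nonempty := Finsupp.support_nonempty_iff.mpr h0
  have hpos := hne.card_pos
  have hcard1 : d.support.card = 1 := by omega
  obtain ⟨a, b, hb, rfl⟩ := Finsupp.card_support_eq_one'.mp hcard1
  refine ⟨a, ?_⟩
  have hb1 : b = 1 := by
    have hs : (Finsupp.single a b).sum (fun _ e => e) = b := Finsupp.sum_single_index rfl
    rw [hs] at hd
    omega
  rw [hb1]

lemma lem_affine_repr [Fintype σ] (g : MvPolynomial σ ℂ) (hdeg : totalDegree g ≤ 1) :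
    g = C (constantCoeff g) + ∑ i : σ, C (coeff (Finsupp.single i 1) g) * X i := by
  apply MvPolynomial.ext
  intro d
  rw [coeff_add, coeff_C, coeff_sum]
  have hterm : ∀ i : σ, coeff d (C (coeff (Finsupp.single i 1) g) * X i)
      = if Finsupp.single i 1 = d then coeff (Finsupp.single i 1) g else 0 := by
    intro i
    rw [coeff_C_mul, coeff_X']
    by_cases h : Finsupp.single i 1 = d <;> simp [h]
  rw [Finset.sum_congr rfl fun i _ => hterm i]
  by_cases hd : d = 0
  · subst hd
    rw [if_pos rfl]
    have : ∀ i : σ, (if Finsupp.single i 1 = 0 then coeff (Finsupp.single i 1) g else 0) = 0 := by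
      intro i
      rw [if_neg]
      exact fun h => (one_ne_zero : (1:ℕ) ≠ 0) (Finsupp.single_eq_zero.mp h)
    rw [Finset.sum_congr rfl fun i _ => this i, Finset.sum_const_zero, add_zero]
    rfl
  · rw [if_neg (Ne.symm hd)]
    by_cases hs : ∃ i, d = Finsupp.single i 1
    · obtain ⟨i₀, rfl⟩ := hs
      rw [zero_add]
      rw [Finset.sum_eq_single i₀]
      · rw [if_pos rfl]
      · intro i _ hi
        rw [if_neg]
        intro h
        exact hi (by
          have := Finsupp.ext_iff.mp h i
          have h2 := Finsupp.ext_iff.mp h i₀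
          simp [Finsupp.single_apply] at this h2
          by_cases hii : i = i₀
          · exact hii
          · simp [hii, Ne.symm hii] at this h2
            )
      · intro h
        exact absurd (Finset.mem_univ i₀) h
    · -- d not 0 nor single: coeff d g = 0
      have hdg : coeff d g = 0 := by
        by_contra hne
        have hmem : d ∈ g.support := mem_support_iff.mpr hne
        have := le_totalDegree hmem
        have hsum : (d.sum fun _ e => e) ≤ 1 := le_trans this hdeg
        rcases lem_classify d hsum with h | h
        · exact hd h
        · obtain ⟨i, hi⟩ := h
          exact hs ⟨i, hi⟩
      rw [hdg, zero_add]
      symm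
      apply Finset.sum_eq_zero
      intro i _
      rw [if_neg]
      intro h
      exact hs ⟨i, h.symm⟩

lemma lem_affine_eval [Fintype σ] (g : MvPolynomial σ ℂ) (hdeg : totalDegree g ≤ 1)
    (x : σ → ℂ) :
    eval x g = constantCoeff g + ∑ i : σ, coeff (Finsupp.single i 1) g * x i := by
  conv_lhs => rw [lem_affine_repr g hdeg]
  simp

lemma lem_line_eval [Fintype σ] (g : MvPolynomial σ ℂ) (hdeg : totalDegree g ≤ 1)
    (p v : σ → ℝ) (t : ℝ) :
    eval (fun i => ((p i + t * v i : ℝ) : ℂ)) g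
      = (eval (fun i => ((p i : ℝ) : ℂ)) g)
        + (t : ℂ) * ∑ i : σ, coeff (Finsupp.single i 1) g * (v i : ℂ) := by
  rw [lem_affine_eval g hdeg, lem_affine_eval g hdeg]
  rw [Finset.mul_sum, add_assoc, ← Finset.sum_add_distrib]
  congr 1
  apply Finset.sum_congr rfl
  intro i _
  push_cast
  ring

lemma lem_conclude (g h : MvPolynomial σ ℂ) (lam : ℝ)
    (hpt : ∀ p : σ → ℝ, eval (fun i => (p i : ℂ)) h
      = (lam : ℂ) * (starRingEnd ℂ) (eval (fun i => (p i : ℂ)) g)) :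
    h = C (lam : ℂ) * MvPolynomial.map (starRingEnd ℂ) g := by
  have hz : ∀ p : σ → ℝ,
      eval (fun i => (p i : ℂ)) (h - C (lam : ℂ) * MvPolynomial.map (starRingEnd ℂ) g) = 0 := by
    intro p
    rw [map_sub, map_mul, eval_C, lem_eval_conj g _ (fun i => Complex.conj_ofReal (p i)),
      hpt p, sub_self]
  have := lem_density _ hz
  linear_combination this

lemma lem_sum_dir [Fintype σ] (w : σ → ℂ) (i₀ j₀ : σ) (s : ℝ) :
    ∑ i : σ, w i * ((((if i = i₀ then (1:ℝ) else 0) + s * (if i = j₀ then (1:ℝ) else 0)) : ℝ) : ℂ)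
      = w i₀ + (s : ℂ) * w j₀ := by
  have step1 : ∀ i : σ, w i * ((((if i = i₀ then (1:ℝ) else 0) + s * (if i = j₀ then (1:ℝ) else 0)) : ℝ) : ℂ)
      = w i * (((if i = i₀ then (1:ℝ) else 0) : ℝ) : ℂ)
        + (s:ℂ) * (w i * (((if i = j₀ then (1:ℝ) else 0) : ℝ) : ℂ)) := by
    intro i
    push_cast
    ring
  have step2 : ∀ (j : σ), ∑ i : σ, w i * (((if i = j then (1:ℝ) else 0) : ℝ) : ℂ) = w j := by
    intro j
    have : ∀ i : σ, w i * (((if i = j then (1:ℝ) else 0) : ℝ) : ℂ)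
        = if i = j then w i else 0 := by
      intro i
      by_cases hij : i = j <;> simp [hij]
    rw [Finset.sum_congr rfl fun i _ => this i, Finset.sum_ite_eq' Finset.univ j w]
    simp
  rw [Finset.sum_congr rfl fun i _ => step1 i, Finset.sum_add_distrib, ← Finset.mul_sum,
    step2 i₀, step2 j₀]

lemma lem_base [Fintype σ] (g h : MvPolynomial σ ℂ) (hgne : g ≠ 0) (hhne : h ≠ 0)
    (hgdeg : totalDegree g ≤ 1) (hhdeg : totalDegree h ≤ 1)
    (hre : ∀ p : σ → ℝ, (eval (fun i => (p i : ℂ)) (g * h)).im = 0)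
    (hnn : ∀ p : σ → ℝ, 0 ≤ (eval (fun i => (p i : ℂ)) (g * h)).re) :
    ∃ lam : ℝ, 0 < lam ∧ h = C (lam : ℂ) * MvPolynomial.map (starRingEnd ℂ) g := by
  classical
  set cg := constantCoeff g with hcgdef
  set ch := constantCoeff h with hchdef
  set lg : σ → ℂ := fun i => coeff (Finsupp.single i 1) g with hlgdef
  set lh : σ → ℂ := fun i => coeff (Finsupp.single i 1) h with hlhdef
  -- line products
  have hprod : ∀ (p v : σ → ℝ) (t : ℝ),
      (((eval (fun i => (p i : ℂ)) g) + (t:ℂ) * ∑ i : σ, lg i * (v i : ℂ))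
        * ((eval (fun i => (p i : ℂ)) h) + (t:ℂ) * ∑ i : σ, lh i * (v i : ℂ))).im = 0
      ∧ 0 ≤ (((eval (fun i => (p i : ℂ)) g) + (t:ℂ) * ∑ i : σ, lg i * (v i : ℂ))
        * ((eval (fun i => (p i : ℂ)) h) + (t:ℂ) * ∑ i : σ, lh i * (v i : ℂ))).re := by
    intro p v t
    have h1 : eval (fun i => ((p i + t * v i : ℝ) : ℂ)) (g * h)
        = ((eval (fun i => (p i : ℂ)) g) + (t:ℂ) * ∑ i : σ, lg i * (v i : ℂ))
          * ((eval (fun i => (p i : ℂ)) h) + (t:ℂ) * ∑ i : σ, lh i * (v i : ℂ)) := by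
      rw [map_mul, lem_line_eval g hgdeg p v t, lem_line_eval h hhdeg p v t]
    constructor
    · rw [← h1]; exact hre _
    · rw [← h1]; exact hnn _
  by_cases hgc : ∀ i, lg i = 0
  · -- g is constant
    have hgC : g = C cg := by
      conv_lhs => rw [lem_affine_repr g hgdeg]
      rw [hcgdef]
      have : ∀ i : σ, C (coeff (Finsupp.single i 1) g) * (X i : MvPolynomial σ ℂ) = 0 := by
        intro i
        rw [show coeff (Finsupp.single i 1) g = lg i from rfl, hgc i, map_zero, zero_mul]
      rw [Finset.sum_congr rfl fun i _ => this i, Finset.sum_const_zero, add_zero]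
    have hcg : cg ≠ 0 := fun h0 => hgne (by rw [hgC, h0, map_zero])
    have hEg : ∀ p : σ → ℝ, eval (fun i => (p i : ℂ)) g = cg := by
      intro p; rw [hgC, eval_C]
    have hhc : ∀ i, lh i = 0 := by
      intro i
      have key : ∀ t : ℝ, ((cg * eval (fun i => ((0:ℝ) : ℂ)) h + t * (cg * lh i)).im = 0)
          ∧ 0 ≤ (cg * eval (fun i => ((0:ℝ) : ℂ)) h + t * (cg * lh i)).re := by
        intro t
        have := hprod (fun _ => 0) (fun j => if j = i then 1 else 0) t
        rw [hEg] at this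
        have hsg : ∑ j : σ, lg j * ((if j = i then (1:ℝ) else 0 : ℝ) : ℂ) = 0 := by
          apply Finset.sum_eq_zero; intro j _; rw [hgc j, zero_mul]
        have hsh : ∑ j : σ, lh j * ((if j = i then (1:ℝ) else 0 : ℝ) : ℂ) = lh i := by
          have : ∀ j : σ, lh j * ((if j = i then (1:ℝ) else 0 : ℝ) : ℂ)
              = if j = i then lh j else 0 := by
            intro j; by_cases hji : j = i <;> simp [hji]
          rw [Finset.sum_congr rfl fun j _ => this j, Finset.sum_ite_eq' Finset.univ i lh]
          simp
        rw [hsg, hsh, mul_zero, add_zero] at this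
        have heq : cg * (eval (fun i => ((0:ℝ) : ℂ)) h + (t:ℂ) * lh i)
            = cg * eval (fun i => ((0:ℝ) : ℂ)) h + t * (cg * lh i) := by ring
        rw [heq] at this
        exact this
      have := lem_lin _ _ key
      rcases mul_eq_zero.mp this with h0 | h0
      · exact absurd h0 hcg
      · exact h0
    have hhC : h = C ch := by
      conv_lhs => rw [lem_affine_repr h hhdeg]
      rw [hchdef]
      have : ∀ i : σ, C (coeff (Finsupp.single i 1) h) * (X i : MvPolynomial σ ℂ) = 0 := by
        intro i
        rw [show coeff (Finsupp.single i 1) h = lh i from rfl, hhc i, map_zero, zero_mul]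
      rw [Finset.sum_congr rfl fun i _ => this i, Finset.sum_const_zero, add_zero]
    have hch : ch ≠ 0 := fun h0 => hhne (by rw [hhC, h0, map_zero])
    set w : ℂ := cg * ch with hwdef
    have hwne : w ≠ 0 := mul_ne_zero hcg hch
    have hw0 : eval (fun i => ((0:ℝ) : ℂ)) (g * h) = w := by
      rw [map_mul, hEg, hhC, eval_C]
    have hwim : w.im = 0 := by rw [← hw0]; exact hre _
    have hwre : 0 < w.re := by
      have h1 := hnn (fun _ => 0)
      rw [hw0] at h1
      rcases lt_or_eq_of_le h1 with h' | h'
      · exact h'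
      · exact absurd (Complex.ext h'.symm hwim) hwne
    refine ⟨w.re / Complex.normSq cg, div_pos hwre (Complex.normSq_pos.mpr hcg), ?_⟩
    apply lem_conclude
    intro p
    rw [hhC, eval_C, hEg]
    have h1 : ((w.re / Complex.normSq cg : ℝ) : ℂ) = w / (cg * (starRingEnd ℂ) cg) := by
      rw [Complex.mul_conj, Complex.ofReal_div]
      congr 1
      exact Complex.ext rfl (by simp [hwim])
    rw [h1]
    have h2 : cg * (starRingEnd ℂ) cg ≠ 0 := mul_ne_zero hcg (by simpa using hcg)
    rw [div_mul_eq_mul_div, eq_div_iff h2, hwdef]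
    ring
  · push_neg at hgc
    obtain ⟨i₀, hi₀⟩ := hgc
    by_cases hhc : ∀ i, lh i = 0
    · -- h constant: derive contradiction
      exfalso
      have hhC : h = C ch := by
        conv_lhs => rw [lem_affine_repr h hhdeg]
        rw [hchdef]
        have : ∀ i : σ, C (coeff (Finsupp.single i 1) h) * (X i : MvPolynomial σ ℂ) = 0 := by
          intro i
          rw [show coeff (Finsupp.single i 1) h = lh i from rfl, hhc i, map_zero, zero_mul]
        rw [Finset.sum_congr rfl fun i _ => this i, Finset.sum_const_zero, add_zero]
      have hch : ch ≠ 0 := fun h0 => hhne (by rw [hhC, h0, map_zero])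
      have hEh : ∀ p : σ → ℝ, eval (fun i => (p i : ℂ)) h = ch := by
        intro p; rw [hhC, eval_C]
      have key : ∀ t : ℝ, ((eval (fun i => ((0:ℝ) : ℂ)) g * ch + t * (lg i₀ * ch)).im = 0)
          ∧ 0 ≤ (eval (fun i => ((0:ℝ) : ℂ)) g * ch + t * (lg i₀ * ch)).re := by
        intro t
        have := hprod (fun _ => 0) (fun j => if j = i₀ then 1 else 0) t
        rw [hEh] at this
        have hsh : ∑ j : σ, lh j * ((if j = i₀ then (1:ℝ) else 0 : ℝ) : ℂ) = 0 := by
          apply Finset.sum_eq_zero; intro j _; rw [hhc j, zero_mul]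
        have hsg : ∑ j : σ, lg j * ((if j = i₀ then (1:ℝ) else 0 : ℝ) : ℂ) = lg i₀ := by
          have : ∀ j : σ, lg j * ((if j = i₀ then (1:ℝ) else 0 : ℝ) : ℂ)
              = if j = i₀ then lg j else 0 := by
            intro j; by_cases hji : j = i₀ <;> simp [hji]
          rw [Finset.sum_congr rfl fun j _ => this j, Finset.sum_ite_eq' Finset.univ i₀ lg]
          simp
        rw [hsh, hsg, mul_zero, add_zero] at this
        have heq : (eval (fun i => ((0:ℝ) : ℂ)) g + (t:ℂ) * lg i₀) * ch
            = eval (fun i => ((0:ℝ) : ℂ)) g * ch + t * (lg i₀ * ch) := by ring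
        rw [heq] at this
        exact this
      have := lem_lin _ _ key
      rcases mul_eq_zero.mp this with h0 | h0
      · exact hi₀ h0
      · exact hch h0
    · push_neg at hhc
      obtain ⟨j₀, hj₀⟩ := hhc
      -- choose a direction
      have hdir : ∃ v : σ → ℝ, (∑ i : σ, lg i * (v i : ℂ)) ≠ 0
          ∧ (∑ i : σ, lh i * (v i : ℂ)) ≠ 0 := by
        have hval : ∀ s : ℝ,
            (∑ i : σ, lg i * ((((if i = i₀ then (1:ℝ) else 0) + s * (if i = j₀ then (1:ℝ) else 0)) : ℝ) : ℂ))
              = lg i₀ + (s:ℂ) * lg j₀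
            ∧ (∑ i : σ, lh i * ((((if i = i₀ then (1:ℝ) else 0) + s * (if i = j₀ then (1:ℝ) else 0)) : ℝ) : ℂ))
              = lh i₀ + (s:ℂ) * lh j₀ :=
          fun s => ⟨lem_sum_dir lg i₀ j₀ s, lem_sum_dir lh i₀ j₀ s⟩
        by_cases h1 : lh i₀ = 0
        · have hij : i₀ ≠ j₀ := by rintro rfl; exact hj₀ h1
          by_cases h2 : lg i₀ + lg j₀ = 0
          · refine ⟨fun i => (if i = i₀ then (1:ℝ) else 0) + 2 * (if i = j₀ then (1:ℝ) else 0), ?_, ?_⟩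
            · rw [(hval 2).1]
              intro h0
              apply hi₀
              have : lg j₀ = -lg i₀ := by linear_combination h2
              rw [this] at h0
              have : -lg i₀ = 0 := by push_cast at h0; linear_combination h0
              linear_combination -this
            · rw [(hval 2).2, h1]
              intro h0
              apply hj₀
              push_cast at h0
              have : (2:ℂ) * lh j₀ = 0 := by linear_combination h0
              rcases mul_eq_zero.mp this with h' | h'
              · norm_num at h'
              · exact h'
          · refine ⟨fun i => (if i = i₀ then (1:ℝ) else 0) + 1 * (if i = j₀ then (1:ℝ) else 0), ?_, ?_⟩
            · rw [(hval 1).1]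
              intro h0; apply h2; push_cast at h0; linear_combination h0
            · rw [(hval 1).2, h1]
              intro h0
              apply hj₀
              push_cast at h0
              linear_combination h0
        · refine ⟨fun i => (if i = i₀ then (1:ℝ) else 0) + 0 * (if i = j₀ then (1:ℝ) else 0), ?_, ?_⟩
          · rw [(hval 0).1]
            intro h0; apply hi₀; push_cast at h0; linear_combination h0
          · rw [(hval 0).2]
            intro h0; apply h1; push_cast at h0; linear_combination h0
      obtain ⟨v, hβ, hδ⟩ := hdir
      set β : ℂ := ∑ i : σ, lg i * (v i : ℂ) with hβdef
      set δ : ℂ := ∑ i : σ, lh i * (v i : ℂ) with hδdef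
      -- β δ is real and positive
      have haux := lem_quad_aux (eval (fun i => ((0:ℝ) : ℂ)) g * eval (fun i => ((0:ℝ) : ℂ)) h)
        (eval (fun i => ((0:ℝ) : ℂ)) g * δ + β * eval (fun i => ((0:ℝ) : ℂ)) h) (β * δ) (by
          intro t
          have := hprod (fun _ => 0) v t
          have heq : (eval (fun i => ((0:ℝ) : ℂ)) g + (t:ℂ) * β)
              * (eval (fun i => ((0:ℝ) : ℂ)) h + (t:ℂ) * δ)
              = eval (fun i => ((0:ℝ) : ℂ)) g * eval (fun i => ((0:ℝ) : ℂ)) h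
                + (t:ℂ) * (eval (fun i => ((0:ℝ) : ℂ)) g * δ + β * eval (fun i => ((0:ℝ) : ℂ)) h)
                + (t:ℂ)^2 * (β * δ) := by ring
          rw [heq] at this
          exact this)
      obtain ⟨-, -, hCim, hCre, -⟩ := haux
      have hβδ : β * δ ≠ 0 := mul_ne_zero hβ hδ
      have hCpos : 0 < (β * δ).re := by
        rcases lt_or_eq_of_le hCre with h' | h'
        · exact h'
        · exact absurd (Complex.ext h'.symm hCim) hβδ
      refine ⟨(β * δ).re / Complex.normSq β, div_pos hCpos (Complex.normSq_pos.mpr hβ), ?_⟩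
      apply lem_conclude
      intro p
      have hq := lem_quad (eval (fun i => (p i : ℂ)) g) β (eval (fun i => (p i : ℂ)) h) δ hβ hδ
        (fun t => hprod p v t)
      have h1 : (((β * δ).re / Complex.normSq β : ℝ) : ℂ) = (β * δ) / (β * (starRingEnd ℂ) β) := by
        rw [Complex.mul_conj, Complex.ofReal_div]
        congr 1
        exact Complex.ext rfl (by simp [hCim])
      rw [h1]
      have h2 : β * (starRingEnd ℂ) β ≠ 0 := mul_ne_zero hβ (by simpa using hβ)
      have h3 : (starRingEnd ℂ) β ≠ 0 := by simpa using hβ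
      rw [div_mul_eq_mul_div, eq_div_iff h2]
      linear_combination β * hq
end

noncomputable def dL {σ : Type*} (L : List σ) (p : MvPolynomial σ ℂ) : MvPolynomial σ ℂ :=
  L.foldl (fun q i => pderiv i q) p

@[simp] lemma dL_nil {σ : Type*} (p : MvPolynomial σ ℂ) : dL [] p = p := rfl

@[simp] lemma dL_cons {σ : Type*} (j : σ) (T : List σ) (p : MvPolynomial σ ℂ) :
    dL (j :: T) p = dL T (pderiv j p) := rfl

lemma dL_zero {σ : Type*} (L : List σ) : dL L (0 : MvPolynomial σ ℂ) = 0 := by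
  induction L with
  | nil => rfl
  | cons j T ih => rw [dL_cons, map_zero, ih]

lemma dL_ne_zero {σ : Type*} (L : List σ) (p : MvPolynomial σ ℂ) (h : dL L p ≠ 0) : p ≠ 0 := by
  intro h0
  rw [h0, dL_zero] at h
  exact h rfl

lemma lem_coe_update {σ : Type*} [DecidableEq σ] (p : σ → ℝ) (j : σ) (t : ℝ) :
    (fun i => ((Function.update p j t i : ℝ) : ℂ))
      = Function.update (fun i => ((p i : ℝ) : ℂ)) j (t : ℂ) := by
  funext i
  by_cases hij : i = j
  · subst hij; simp
  · simp [Function.update_of_ne hij]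

lemma lem_key {σ : Type*} [DecidableEq σ] [Fintype σ] (L : List σ) :
    ∀ (g h : MvPolynomial σ ℂ), L.Nodup →
    (∀ i ∈ L, degreeOf i g ≤ 1) → (∀ i ∈ L, degreeOf i h ≤ 1) →
    dL L g ≠ 0 → (dL L g).totalDegree ≤ 1 →
    dL L h ≠ 0 → (dL L h).totalDegree ≤ 1 →
    (∀ p : σ → ℝ, (eval (fun i => (p i : ℂ)) (g * h)).im = 0) →
    (∀ p : σ → ℝ, 0 ≤ (eval (fun i => (p i : ℂ)) (g * h)).re) →
    ∃ lam : ℝ, 0 < lam ∧ h = C (lam : ℂ) * MvPolynomial.map (starRingEnd ℂ) g := by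
  induction L with
  | nil =>
    intro g h _ _ _ hgne hgdeg hhne hhdeg hre hnn
    exact lem_base g h hgne hhne hgdeg hhdeg hre hnn
  | cons j T ih =>
    intro g h hnd hg1 hh1 hgne hgdeg hhne hhdeg hre hnn
    rw [List.nodup_cons] at hnd
    obtain ⟨hjT, hndT⟩ := hnd
    set g₁ := pderiv j g with hg₁def
    set h₁ := pderiv j h with hh₁def
    have hdg1 : degreeOf j g ≤ 1 := hg1 j List.mem_cons_self
    have hdh1 : degreeOf j h ≤ 1 := hh1 j List.mem_cons_self
    have hg₁j : degreeOf j g₁ = 0 := lem_degreeOf_pderiv_self j g hdg1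
    have hh₁j : degreeOf j h₁ = 0 := lem_degreeOf_pderiv_self j h hdh1
    -- the line decomposition at a real point
    have hline : ∀ (p : σ → ℝ) (t : ℝ),
        eval (fun i => ((Function.update p j t i : ℝ) : ℂ)) (g * h)
          = (eval (Function.update (fun i => ((p i : ℝ) : ℂ)) j 0) g
              + (t : ℂ) * eval (fun i => ((p i : ℝ) : ℂ)) g₁)
            * (eval (Function.update (fun i => ((p i : ℝ) : ℂ)) j 0) h
              + (t : ℂ) * eval (fun i => ((p i : ℝ) : ℂ)) h₁) := by
      intro p t
      rw [lem_coe_update, map_mul, lem_evalLin j g hdg1 _ (t : ℂ),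
        lem_evalLin j h hdh1 _ (t : ℂ)]
      rw [lem_eval_indep j g₁ hg₁j _ 0, lem_eval_indep j h₁ hh₁j _ 0]
    -- hypotheses for the inductive step
    have hre1 : ∀ p : σ → ℝ, (eval (fun i => (p i : ℂ)) (g₁ * h₁)).im = 0 ∧
        0 ≤ (eval (fun i => (p i : ℂ)) (g₁ * h₁)).re := by
      intro p
      have haux := lem_quad_aux
        (eval (Function.update (fun i => ((p i : ℝ) : ℂ)) j 0) g
          * eval (Function.update (fun i => ((p i : ℝ) : ℂ)) j 0) h)
        (eval (Function.update (fun i => ((p i : ℝ) : ℂ)) j 0) g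
            * eval (fun i => ((p i : ℝ) : ℂ)) h₁
          + eval (fun i => ((p i : ℝ) : ℂ)) g₁
            * eval (Function.update (fun i => ((p i : ℝ) : ℂ)) j 0) h)
        (eval (fun i => ((p i : ℝ) : ℂ)) g₁ * eval (fun i => ((p i : ℝ) : ℂ)) h₁) (by
          intro t
          have h1 := hline p t
          have h2 : ∀ z : ℂ, z = eval (fun i => ((Function.update p j t i : ℝ) : ℂ)) (g * h)
              → z.im = 0 ∧ 0 ≤ z.re := by
            rintro z rfl
            exact ⟨hre _, hnn _⟩
          apply h2
          rw [h1]
          ring)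
      obtain ⟨-, -, hCim, hCre, -⟩ := haux
      rw [map_mul]
      exact ⟨hCim, hCre⟩
    obtain ⟨lam, hlam, hident⟩ := ih g₁ h₁ hndT
      (fun i hi => le_trans (lem_degreeOf_pderiv_ne i j (fun e => hjT (e ▸ hi)) g)
        (hg1 i (List.mem_cons_of_mem j hi)))
      (fun i hi => le_trans (lem_degreeOf_pderiv_ne i j (fun e => hjT (e ▸ hi)) h)
        (hh1 i (List.mem_cons_of_mem j hi)))
      hgne hgdeg hhne hhdeg (fun p => (hre1 p).1) (fun p => (hre1 p).2)
    refine ⟨lam, hlam, ?_⟩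
    -- show g₁ * (h - C lam * conj g) = 0
    have hg₁ne : g₁ ≠ 0 := dL_ne_zero T g₁ hgne
    have hkey : g₁ * (h - C (lam : ℂ) * MvPolynomial.map (starRingEnd ℂ) g) = 0 := by
      apply lem_density
      intro p
      rw [map_mul]
      by_cases ha : eval (fun i => (p i : ℂ)) g₁ = 0
      · rw [ha, zero_mul]
      · -- nonvanishing case: use lem_quad
        set x : σ → ℂ := fun i => ((p i : ℝ) : ℂ) with hxdef
        set a₀ := eval (Function.update x j 0) g with ha₀def
        set a₁ := eval x g₁ with ha₁def
        set b₀ := eval (Function.update x j 0) h with hb₀def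
        set b₁ := eval x h₁ with hb₁def
        have hb₁ : b₁ = (lam : ℂ) * (starRingEnd ℂ) a₁ := by
          rw [hb₁def, hident, map_mul, eval_C,
            lem_eval_conj g₁ x (fun i => Complex.conj_ofReal (p i))]
        have hb₁ne : b₁ ≠ 0 := by
          rw [hb₁]
          exact mul_ne_zero (by exact_mod_cast ne_of_gt hlam) (by simpa using ha)
        have hq := lem_quad a₀ a₁ b₀ b₁ ha hb₁ne (by
          intro t
          have h1 := hline p t
          have h2 : ∀ z : ℂ, z = eval (fun i => ((Function.update p j t i : ℝ) : ℂ)) (g * h)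
              → z.im = 0 ∧ 0 ≤ z.re := by
            rintro z rfl
            exact ⟨hre _, hnn _⟩
          apply h2
          rw [h1])
        -- b₀ = lam * conj a₀
        have hb₀ : b₀ = (lam : ℂ) * (starRingEnd ℂ) a₀ := by
          have hca₁ : (starRingEnd ℂ) a₁ ≠ 0 := by simpa using ha
          rw [hb₁] at hq
          have := mul_right_cancel₀ hca₁ (by linear_combination hq :
            b₀ * (starRingEnd ℂ) a₁ = ((lam : ℂ) * (starRingEnd ℂ) a₀) * (starRingEnd ℂ) a₁)
          exact this
        -- now evaluate F at x
        have hevalh : eval x h = b₀ + x j * b₁ := by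
          have h1 := lem_evalLin j h hdh1 x (x j)
          rw [Function.update_eq_self] at h1
          rw [h1, lem_eval_indep j h₁ hh₁j x 0]
        have hevalg : eval x g = a₀ + x j * a₁ := by
          have h1 := lem_evalLin j g hdg1 x (x j)
          rw [Function.update_eq_self] at h1
          rw [h1, lem_eval_indep j g₁ hg₁j x 0]
        rw [map_sub, map_mul, eval_C,
          lem_eval_conj g x (fun i => Complex.conj_ofReal (p i)), hevalh, hevalg]
        rw [map_add, hb₀, hb₁, map_mul]
        have hxj : (starRingEnd ℂ) (x j) = x j := Complex.conj_ofReal (p j)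
        rw [hxj]
        ring
    rcases mul_eq_zero.mp hkey with h0 | h0
    · exact absurd h0 hg₁ne
    · linear_combination h0

/-- The iterated derivative `∂^{[n]} = ∂ⁿ/∂x_1⋯∂x_n` with respect to all the
variables `Sum.inl i`, `i : Fin n`. -/
noncomputable def dAll {n k : ℕ} (p : MvPolynomial (Fin n ⊕ Fin k) ℂ) :
    MvPolynomial (Fin n ⊕ Fin k) ℂ :=
  ((List.finRange n).map Sum.inl).foldr (fun i q => pderiv i q) p

/-- if `g, h` are multiaffine in `x_1,...,x_n` with `∂^{[n]}g` and
`∂^{[n]}h` nonzero polynomials in the remaining variables of total degree ≤ 1,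
and `g·h` has real coefficients and is nonnegative on `ℝ^m`, then `h = λ·ḡ`
for some real `λ > 0`. -/
theorem stmt11 {n k : ℕ} (g h : MvPolynomial (Fin n ⊕ Fin k) ℂ)
    (hg1 : ∀ i : Fin n, g.degreeOf (Sum.inl i) ≤ 1)
    (hh1 : ∀ i : Fin n, h.degreeOf (Sum.inl i) ≤ 1)
    (hgne : dAll g ≠ 0) (hgdeg : (dAll g).totalDegree ≤ 1)
    (hgvars : ∀ i : Fin n, (dAll g).degreeOf (Sum.inl i) = 0)
    (hhne : dAll h ≠ 0) (hhdeg : (dAll h).totalDegree ≤ 1)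
    (hhvars : ∀ i : Fin n, (dAll h).degreeOf (Sum.inl i) = 0)
    (hreal : ∀ m, (coeff m (g * h)).im = 0)
    (hnonneg : ∀ p : (Fin n ⊕ Fin k) → ℝ,
      0 ≤ (eval (fun t => (p t : ℂ)) (g * h)).re) :
    ∃ lam : ℝ, 0 < lam ∧ h = (lam : ℂ) • MvPolynomial.map (starRingEnd ℂ) g := by
  classical
  set L : List (Fin n ⊕ Fin k) := (((List.finRange n).map Sum.inl).reverse) with hLdef
  have hdL : ∀ p : MvPolynomial (Fin n ⊕ Fin k) ℂ, dL L p = dAll p := by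
    intro p
    show (((List.finRange n).map Sum.inl).reverse).foldl (fun q i => pderiv i q) p = _
    rw [List.foldl_reverse]
    rfl
  have hLnd : L.Nodup := by
    rw [hLdef, List.nodup_reverse]
    exact (List.nodup_finRange n).map (fun a b hab => Sum.inl.inj hab)
  have hmem : ∀ i ∈ L, ∃ i' : Fin n, i = Sum.inl i' := by
    intro i hi
    rw [hLdef, List.mem_reverse, List.mem_map] at hi
    obtain ⟨i', _, rfl⟩ := hi
    exact ⟨i', rfl⟩
  have hre : ∀ p : (Fin n ⊕ Fin k) → ℝ, (eval (fun i => (p i : ℂ)) (g * h)).im = 0 :=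
    fun p => lem_eval_real_im (g * h) hreal p
  obtain ⟨lam, hlam, hid⟩ := lem_key L g h hLnd
    (fun i hi => by obtain ⟨i', rfl⟩ := hmem i hi; exact hg1 i')
    (fun i hi => by obtain ⟨i', rfl⟩ := hmem i hi; exact hh1 i')
    (by rw [hdL]; exact hgne) (by rw [hdL]; exact hgdeg)
    (by rw [hdL]; exact hhne) (by rw [hdL]; exact hhdeg)
    hre hnonneg
  exact ⟨lam, hlam, by rw [hid, smul_eq_C_mul]⟩
end

section
/- Let f ∈ ℂ[x_1,...,x_n] be multiaffine in x_1,...,x_n. If f = det(diag(x_1,...,x_n) + ∑_{j} x_{n+j} A_j + A_0) where all A_j, A_0 are n×n Hermitian complex matrices, then for any distinct i, j ∈ [n], the Rayleigh difference Δ_ij(f) is a Hermitian square, i.e., Δ_ij(f) = g·ḡ for some g ∈ ℂ[x_1,...,x_m]. -/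
open MvPolynomial Matrix

set_option linter.unusedSectionVars false
set_option linter.unusedVariables false
set_option maxHeartbeats 1000000

section DJAux

open Polynomial

variable {ι : Type*} [DecidableEq ι] [Fintype ι] {R : Type*} [CommRing R]

lemma det_updateRow_sum_single (A : Matrix ι ι R) (p : ι) (r : ι → R) :
    (A.updateRow p r).det = ∑ k, r k * (A.updateRow p (Pi.single k 1)).det := by
  have h1 : r = ∑ k : ι, Pi.single k (r k) := by
    ext b; simp [Pi.single_apply]
  have key : ∀ (s : Finset ι),
      (A.updateRow p (∑ k ∈ s, Pi.single k (r k))).det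
        = ∑ k ∈ s, r k * (A.updateRow p (Pi.single k 1)).det := by
    intro s
    refine Finset.induction_on s ?_ ?_
    · simp only [Finset.sum_empty]
      have : (0 : ι → R) = (0 : R) • (fun _ => (0:R)) := by funext b; simp
      rw [this, Matrix.det_updateRow_smul]; simp
    · intro x t hx ih
      rw [Finset.sum_insert hx, Matrix.det_updateRow_add, ih, Finset.sum_insert hx]
      congr 1
      have hsingle : (Pi.single x (r x) : ι → R) = r x • (Pi.single x (1:R) : ι → R) := by
        ext b; by_cases hb : b = x <;> simp [Pi.single_apply, hb]
      rw [hsingle, Matrix.det_updateRow_smul]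
  conv_lhs => rw [h1]
  rw [key]

lemma one_row (i : ι) : (1 : Matrix ι ι R) i = Pi.single i 1 := by
  ext b; simp [Matrix.one_apply, Pi.single_apply, eq_comm]

lemma det_swapish {i j : ι} (hij : i ≠ j) :
    (((1 : Matrix ι ι R).updateRow i (Pi.single j 1)).updateRow j (Pi.single i 1)).det = -1 := by
  have hmat : ((1 : Matrix ι ι R).updateRow i (Pi.single j 1)).updateRow j (Pi.single i 1)
      = (1 : Matrix ι ι R).submatrix (Equiv.swap i j) id := by
    ext a b
    rcases eq_or_ne a j with rfl | haj
    · rw [Matrix.updateRow_self]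
      simp [Matrix.one_apply, Pi.single_apply, Equiv.swap_apply_right, eq_comm]
    rcases eq_or_ne a i with rfl | hai
    · rw [Matrix.updateRow_ne haj, Matrix.updateRow_self]
      simp [Matrix.one_apply, Pi.single_apply, Equiv.swap_apply_left, eq_comm]
    · rw [Matrix.updateRow_ne haj, Matrix.updateRow_ne hai]
      simp [Matrix.one_apply, Equiv.swap_apply_of_ne_of_ne hai haj]
  rw [hmat, Matrix.det_permute, Matrix.det_one, Equiv.Perm.sign_swap hij]
  simp

lemma det_update_one_single {i j : ι} (hij : i ≠ j) (k l : ι) :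
    (((1 : Matrix ι ι R).updateRow i (Pi.single k 1)).updateRow j (Pi.single l 1)).det
      = if k = i ∧ l = j then 1 else if k = j ∧ l = i then -1 else 0 := by
  have hrow : ∀ (a : ι), a ≠ i → a ≠ j →
      (((1 : Matrix ι ι R).updateRow i (Pi.single k 1)).updateRow j (Pi.single l 1)) a
        = Pi.single a 1 := by
    intro a hai haj
    rw [Matrix.updateRow_ne haj, Matrix.updateRow_ne hai, one_row]
  have hi : (((1 : Matrix ι ι R).updateRow i (Pi.single k 1)).updateRow j (Pi.single l 1)) i
      = Pi.single k 1 := by rw [Matrix.updateRow_ne hij, Matrix.updateRow_self]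
  have hj : (((1 : Matrix ι ι R).updateRow i (Pi.single k 1)).updateRow j (Pi.single l 1)) j
      = Pi.single l 1 := Matrix.updateRow_self
  by_cases hk : k = l
  · subst hk
    rw [Matrix.det_zero_of_row_eq hij (hi.trans hj.symm)]
    have h1 : ¬ (k = i ∧ k = j) := by rintro ⟨rfl, h2⟩; exact hij h2
    have h2 : ¬ (k = j ∧ k = i) := by rintro ⟨rfl, h2⟩; exact hij h2.symm
    simp [h1, h2]
  by_cases hki : k = i
  · by_cases hlj : l = j
    · rw [hki, hlj, ← one_row, Matrix.updateRow_eq_self, ← one_row, Matrix.updateRow_eq_self,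
        Matrix.det_one]
      simp [hki, hlj]
    · have hli : l ≠ i := fun h => hk (hki.trans h.symm)
      rw [Matrix.det_zero_of_row_eq hlj ((hrow l hli hlj).trans hj.symm)]
      simp [hlj, hij, hki]
  by_cases hkj : k = j
  · by_cases hli : l = i
    · rw [hkj, hli, det_swapish hij]
      simp [hij, Ne.symm hij]
    · have hlj : l ≠ j := fun h => hk (hkj.trans h.symm)
      rw [Matrix.det_zero_of_row_eq hlj ((hrow l hli hlj).trans hj.symm)]
      simp [hki, hli]
  · rw [Matrix.det_zero_of_row_eq hki ((hrow k hki hkj).trans hi.symm)]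
    simp [hki, hkj]

lemma updateRow_comm' (A : Matrix ι ι R) {i j : ι} (h : i ≠ j) (r s : ι → R) :
    (A.updateRow i r).updateRow j s = (A.updateRow j s).updateRow i r := by
  ext a b
  rcases eq_or_ne a i with rfl | hai <;> rcases eq_or_ne a j with rfl | haj <;>
    simp_all [Matrix.updateRow_apply]

lemma det_update_one_two {i j : ι} (hij : i ≠ j) (r s : ι → R) :
    (((1 : Matrix ι ι R).updateRow i r).updateRow j s).det = r i * s j - r j * s i := by
  have step : ∀ l, (((1 : Matrix ι ι R).updateRow i r).updateRow j (Pi.single l 1)).det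
      = ∑ k, r k * (if k = i ∧ l = j then (1:R) else if k = j ∧ l = i then -1 else 0) := by
    intro l
    rw [updateRow_comm' _ hij, det_updateRow_sum_single]
    refine Finset.sum_congr rfl fun k _ => ?_
    rw [updateRow_comm' _ (Ne.symm hij), det_update_one_single hij k l]
  have inner : ∀ l, ∑ k, r k * (if k = i ∧ l = j then (1:R) else if k = j ∧ l = i then -1 else 0)
      = (if l = j then r i else 0) + (if l = i then -(r j) else 0) := by
    intro l
    by_cases hlj : l = j <;> by_cases hli : l = i
    · exact absurd (hli.symm.trans hlj) hij
    · subst hlj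
      simp [hli, mul_ite, Finset.sum_ite_eq', Ne.symm hij]
    · subst hli
      simp [hlj, mul_ite, Finset.sum_ite_eq', hij]
    · simp [hli, hlj, mul_ite]
  rw [det_updateRow_sum_single]
  simp only [step]
  simp only [inner]
  simp only [mul_add, Finset.sum_add_distrib, mul_ite, mul_zero, mul_neg,
    Finset.sum_ite_eq', Finset.mem_univ, if_true]
  ring

lemma mulC (N : Matrix ι ι R) {i j : ι} (hij : i ≠ j) :
    (((1 : Matrix ι ι R).updateRow i (adjugate N i)).updateRow j (adjugate N j)) * N
      = (N.updateRow i (N.det • (Pi.single i 1 : ι → R))).updateRow j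
          (N.det • (Pi.single j 1 : ι → R)) := by
  have hadj : ∀ (a b : ι), ∑ x, adjugate N a x * N x b = N.det * (if a = b then 1 else 0) := by
    intro a b
    have := congrFun (congrFun (Matrix.adjugate_mul N) a) b
    simpa [Matrix.mul_apply, Matrix.one_apply] using this
  have hsingle : ∀ (a b : ι) (c : R), (c • (Pi.single a 1 : ι → R)) b
      = c * (if a = b then 1 else 0) := by
    intro a b c
    rcases eq_or_ne a b with rfl | h
    · simp
    · simp [Pi.single_apply, Ne.symm h, h]
  ext a b
  rw [Matrix.mul_apply]
  rcases eq_or_ne a j with rfl | haj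
  · rw [Matrix.updateRow_self, Matrix.updateRow_self, hadj, hsingle]
  · rw [Matrix.updateRow_ne haj, Matrix.updateRow_ne haj]
    rcases eq_or_ne a i with rfl | hai
    · rw [Matrix.updateRow_self, Matrix.updateRow_self, hadj, hsingle]
    · rw [Matrix.updateRow_ne hai, Matrix.updateRow_ne hai]
      simp [Matrix.one_apply]

lemma dj_mul (N : Matrix ι ι R) {i j : ι} (hij : i ≠ j) :
    (adjugate N i i * adjugate N j j - adjugate N i j * adjugate N j i) * N.det
      = N.det * (N.det *
        ((N.updateRow i (Pi.single i 1)).updateRow j (Pi.single j 1)).det) := by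
  have h := congrArg Matrix.det (mulC N hij)
  rw [Matrix.det_mul, det_update_one_two hij, Matrix.det_updateRow_smul,
    updateRow_comm' _ hij, Matrix.det_updateRow_smul, updateRow_comm' _ (Ne.symm hij)] at h
  rw [h]

/-- Desnanot–Jacobi in adjugate form, over any commutative ring. -/
lemma dj_s13 (N : Matrix ι ι R) {i j : ι} (hij : i ≠ j) :
    adjugate N i i * adjugate N j j - adjugate N i j * adjugate N j i
      = N.det * ((N.updateRow i (Pi.single i 1)).updateRow j (Pi.single j 1)).det := by
  let ψ : R[X] →+* R := Polynomial.evalRingHom 0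
  let Q : Matrix ι ι R[X] := charmatrix (-N)
  have hreg : IsRegular Q.det := Polynomial.Monic.isRegular ((-N).charpoly_monic)
  have h := dj_mul Q hij
  rw [mul_comm] at h
  have h2 := hreg.left h
  have hQ : ψ.mapMatrix Q = N := by
    ext a b
    rcases eq_or_ne a b with rfl | hab
    · simp [ψ, Q, charmatrix_apply_eq]
    · simp [ψ, Q, charmatrix_apply_ne _ _ _ hab]
  have hsing : ∀ p : ι, (⇑ψ ∘ (Pi.single p 1 : ι → R[X])) = (Pi.single p 1 : ι → R) := by
    intro p; funext b
    rcases eq_or_ne b p with rfl | hb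
    · simp
    · simp [Pi.single_apply, hb]
  have hadj : ∀ a b : ι, ψ (adjugate Q a b) = adjugate N a b := by
    intro a b
    have := congrFun (congrFun (RingHom.map_adjugate ψ Q) a) b
    rw [hQ] at this
    exact this
  have hdet : ψ Q.det = N.det := by rw [← hQ, RingHom.map_det]
  have haQ : ψ (((Q.updateRow i (Pi.single i 1)).updateRow j (Pi.single j 1)).det)
      = ((N.updateRow i (Pi.single i 1)).updateRow j (Pi.single j 1)).det := by
    rw [RingHom.map_det ψ]
    congr 1
    rw [RingHom.mapMatrix_apply, Matrix.map_updateRow, Matrix.map_updateRow, hsing, hsing,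
      ← RingHom.mapMatrix_apply, hQ]
  have := congrArg ψ h2
  rw [_root_.map_sub, _root_.map_mul, _root_.map_mul, _root_.map_mul, hadj, hadj, hadj, hadj, hdet, haQ] at this
  exact this

end DJAux

section PderivAux

variable {ι : Type*} [DecidableEq ι] [Fintype ι] {K : Type*} [CommRing K] {σ : Type*}

lemma pderiv_prod_eq_zero {α : Type*} (v : σ) (s : Finset α) (g : α → MvPolynomial σ K)
    (h : ∀ a ∈ s, pderiv v (g a) = 0) : pderiv v (∏ a ∈ s, g a) = 0 := by
  classical
  induction s using Finset.induction_on with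
  | empty => simp [pderiv_one]
  | insert x t hx ih =>
      rw [Finset.prod_insert hx, pderiv_mul, h _ (Finset.mem_insert_self _ _),
        ih fun a ha => h a (Finset.mem_insert_of_mem ha)]
      simp

lemma pderiv_det_eq_zero (v : σ) (M : Matrix ι ι (MvPolynomial σ K))
    (h : ∀ a b, pderiv v (M a b) = 0) : pderiv v M.det = 0 := by
  rw [Matrix.det_apply, map_sum]
  refine Finset.sum_eq_zero fun p _ => ?_
  rw [Units.smul_def, map_zsmul, pderiv_prod_eq_zero v _ _ fun a _ => h _ _, smul_zero]

end PderivAux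

/-- if the multiaffine polynomial `f` equals
`det(diag(x_1,...,x_n) + ∑_j x_{n+j} A_j + A_0)` with all `A_j`, `A_0` Hermitian,
then every Rayleigh difference `Δ_ij(f)` is a Hermitian square `g·ḡ`. -/
theorem stmt13 {n k : ℕ} (A : Fin k → Matrix (Fin n) (Fin n) ℂ)
    (A0 : Matrix (Fin n) (Fin n) ℂ)
    (hA : ∀ j, (A j).IsHermitian) (hA0 : A0.IsHermitian)
    (f : MvPolynomial (Fin n ⊕ Fin k) ℂ)
    (hma : ∀ i : Fin n, f.degreeOf (Sum.inl i) ≤ 1)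
    (hf : f =
      (Matrix.diagonal (fun i : Fin n => (X (Sum.inl i) : MvPolynomial (Fin n ⊕ Fin k) ℂ)) +
        (∑ j : Fin k, (A j).map fun a => X (Sum.inr j) * C a) + A0.map C).det)
    (i j : Fin n) (hij : i ≠ j) :
    ∃ g : MvPolynomial (Fin n ⊕ Fin k) ℂ,
      Rayleigh (Sum.inl i) (Sum.inl j) f = g * MvPolynomial.map (starRingEnd ℂ) g := by
  classical
  set S : Matrix (Fin n) (Fin n) (MvPolynomial (Fin n ⊕ Fin k) ℂ) :=
    (∑ t : Fin k, (A t).map fun a => X (Sum.inr t) * C a) + A0.map C with hS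
  set N : Matrix (Fin n) (Fin n) (MvPolynomial (Fin n ⊕ Fin k) ℂ) :=
    Matrix.of (fun a b =>
      (if a = b ∧ a ≠ i ∧ a ≠ j then X (Sum.inl a) else 0) + S a b) with hN
  set xi : MvPolynomial (Fin n ⊕ Fin k) ℂ := X (Sum.inl i) with hxi
  set xj : MvPolynomial (Fin n ⊕ Fin k) ℂ := X (Sum.inl j) with hxj
  have hNab : ∀ a b, N a b
      = (if a = b ∧ a ≠ i ∧ a ≠ j then X (Sum.inl a) else 0) + S a b := fun a b => rfl
  -- the pencil as a double row update of N
  have hfM : f = ((N.updateRow i (N i + xi •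
        (Pi.single i 1 : Fin n → MvPolynomial (Fin n ⊕ Fin k) ℂ))).updateRow j
        (N j + xj •
        (Pi.single j 1 : Fin n → MvPolynomial (Fin n ⊕ Fin k) ℂ))).det := by
    rw [hf]
    congr 1
    refine Matrix.ext fun a b => ?_
    simp only [Matrix.add_apply]
    rcases eq_or_ne a j with rfl | haj
    · rw [Matrix.updateRow_self]
      rcases eq_or_ne b a with rfl | hb
      · simp [hNab, hS, Matrix.map_apply, Matrix.add_apply, Matrix.diagonal_apply, Pi.single_apply]
        try ring
      · simp [hNab, hS, Matrix.map_apply, Matrix.add_apply, Matrix.diagonal_apply, Pi.single_apply, hb, Ne.symm hb]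
        try ring
    · rw [Matrix.updateRow_ne haj]
      rcases eq_or_ne a i with rfl | hai
      · rw [Matrix.updateRow_self]
        rcases eq_or_ne b a with rfl | hb
        · simp [hNab, hS, Matrix.map_apply, Matrix.add_apply, Matrix.diagonal_apply, Pi.single_apply]
          try ring
        · simp [hNab, hS, Matrix.map_apply, Matrix.add_apply, Matrix.diagonal_apply, Pi.single_apply, hb, Ne.symm hb]
          try ring
      · rw [Matrix.updateRow_ne hai]
        rcases eq_or_ne a b with rfl | hab
        · simp [hNab, hS, Matrix.map_apply, Matrix.add_apply, Matrix.diagonal_apply, hai, haj]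
          try ring
        · simp [hNab, hS, Matrix.map_apply, Matrix.add_apply, Matrix.diagonal_apply, hab]
          try ring
  set dP : MvPolynomial (Fin n ⊕ Fin k) ℂ := N.det with hdP
  set bP : MvPolynomial (Fin n ⊕ Fin k) ℂ := adjugate N i i with hbP
  set cP : MvPolynomial (Fin n ⊕ Fin k) ℂ := adjugate N j j with hcP
  set aP : MvPolynomial (Fin n ⊕ Fin k) ℂ :=
    ((N.updateRow i (Pi.single i 1)).updateRow j (Pi.single j 1)).det with haP
  -- expansion of f
  have hfexp : f = dP + xi * bP + xj * (cP + xi * aP) := by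
    rw [hfM, Matrix.det_updateRow_add, Matrix.det_updateRow_smul]
    have e1 : (N.updateRow i (N i + xi •
        (Pi.single i 1 : Fin n → MvPolynomial (Fin n ⊕ Fin k) ℂ))).updateRow j
          (N j)
        = N.updateRow i (N i + xi •
        (Pi.single i 1 : Fin n → MvPolynomial (Fin n ⊕ Fin k) ℂ)) := by
      rw [show N j = (N.updateRow i (N i + xi •
        (Pi.single i 1 : Fin n → MvPolynomial (Fin n ⊕ Fin k) ℂ))) j from
          (Matrix.updateRow_ne (Ne.symm hij)).symm, Matrix.updateRow_eq_self]
    rw [e1, Matrix.det_updateRow_add, Matrix.det_updateRow_smul, Matrix.updateRow_eq_self]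
    have e2 : (N.updateRow i (N i + xi •
        (Pi.single i 1 : Fin n → MvPolynomial (Fin n ⊕ Fin k) ℂ))).updateRow j
          (Pi.single j 1)
        = ((N.updateRow j (Pi.single j 1)).updateRow i (N i + xi •
        (Pi.single i 1 : Fin n → MvPolynomial (Fin n ⊕ Fin k) ℂ))) :=
      updateRow_comm' N hij _ _
    rw [e2, Matrix.det_updateRow_add, Matrix.det_updateRow_smul]
    have e3 : (N.updateRow j (Pi.single j 1)).updateRow i (N i)
        = N.updateRow j (Pi.single j 1) := by
      rw [show N i = (N.updateRow j (Pi.single j 1)) i from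
          (Matrix.updateRow_ne hij).symm, Matrix.updateRow_eq_self]
    rw [e3]
    have e4 : (N.updateRow j (Pi.single j 1)).updateRow i (Pi.single i 1)
        = (N.updateRow i (Pi.single i 1)).updateRow j (Pi.single j 1) :=
      updateRow_comm' N (Ne.symm hij) _ _
    rw [e4]
    rw [hbP, hcP, Matrix.adjugate_apply, Matrix.adjugate_apply]
    try ring
  -- pderiv-zero infrastructure
  have hSz : ∀ (v : Fin n) (a b : Fin n), pderiv (Sum.inl v) (S a b) = 0 := by
    intro v a b
    rw [hS]
    simp only [Matrix.add_apply, Matrix.sum_apply, Matrix.map_apply]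
    rw [map_add, map_sum]
    have : ∀ t : Fin k, (Sum.inr t : Fin n ⊕ Fin k) ≠ Sum.inl v := fun t h => by
      simp at h
    simp [pderiv_mul, pderiv_C, pderiv_X_of_ne (this _)]
  have hNz : ∀ (v : Fin n), (v = i ∨ v = j) → ∀ a b, pderiv (Sum.inl v) (N a b) = 0 := by
    intro v hv a b
    rw [hNab, map_add, hSz, add_zero]
    split_ifs with h
    · rcases h with ⟨hab, hai', haj'⟩
      have hne : (Sum.inl a : Fin n ⊕ Fin k) ≠ Sum.inl v := by
        rcases hv with rfl | rfl
        · exact fun hh => hai' (Sum.inl.inj hh)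
        · exact fun hh => haj' (Sum.inl.inj hh)
      exact pderiv_X_of_ne hne
    · simp
  have hsingz : ∀ (v : Fin n ⊕ Fin k) (p b : Fin n),
      pderiv v ((Pi.single p 1 : Fin n → MvPolynomial (Fin n ⊕ Fin k) ℂ) b) = 0 := by
    intro v p b
    rcases eq_or_ne b p with rfl | h
    · simp
    · simp [Pi.single_apply, h]
  have hEntry : ∀ (v : Fin n ⊕ Fin k) (W : Matrix (Fin n) (Fin n) (MvPolynomial (Fin n ⊕ Fin k) ℂ)),
      (∀ a b, pderiv v (W a b) = 0) → ∀ (p : Fin n), ∀ a b,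
      pderiv v ((W.updateRow p (Pi.single p 1)) a b) = 0 := by
    intro v W hW p a b
    rcases eq_or_ne a p with rfl | h
    · rw [Matrix.updateRow_self]; exact hsingz v a b
    · rw [Matrix.updateRow_ne h]; exact hW a b
  have hbdet : bP = (N.updateRow i (Pi.single i 1)).det := by
    rw [hbP, Matrix.adjugate_apply]
  have hcdet : cP = (N.updateRow j (Pi.single j 1)).det := by
    rw [hcP, Matrix.adjugate_apply]
  have hDz : ∀ v, (v = i ∨ v = j) → pderiv (Sum.inl v) dP = 0 :=
    fun v hv => pderiv_det_eq_zero _ _ (hNz v hv)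
  have hBz : ∀ v, (v = i ∨ v = j) → pderiv (Sum.inl v) bP = 0 := fun v hv => by
    rw [hbdet]; exact pderiv_det_eq_zero _ _ (hEntry _ _ (hNz v hv) i)
  have hCz : ∀ v, (v = i ∨ v = j) → pderiv (Sum.inl v) cP = 0 := fun v hv => by
    rw [hcdet]; exact pderiv_det_eq_zero _ _ (hEntry _ _ (hNz v hv) j)
  have hAz : ∀ v, (v = i ∨ v = j) → pderiv (Sum.inl v) aP = 0 := fun v hv => by
    rw [haP]; exact pderiv_det_eq_zero _ _ (hEntry _ _ (hEntry _ _ (hNz v hv) i) j)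
  -- derivatives of f
  have hne_ij : (Sum.inl i : Fin n ⊕ Fin k) ≠ Sum.inl j := fun h => hij (Sum.inl.inj h)
  have hdjf : pderiv (Sum.inl j) f = cP + xi * aP := by
    rw [hfexp]
    simp [pderiv_mul, hDz j (Or.inr rfl), hBz j (Or.inr rfl), hCz j (Or.inr rfl),
      hAz j (Or.inr rfl), hxi, hxj, pderiv_X_self, pderiv_X_of_ne hne_ij]
  have hdif : pderiv (Sum.inl i) f = bP + xj * aP := by
    rw [hfexp]
    simp [pderiv_mul, hDz i (Or.inl rfl), hBz i (Or.inl rfl), hCz i (Or.inl rfl),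
      hAz i (Or.inl rfl), hxi, hxj, pderiv_X_self, pderiv_X_of_ne (Ne.symm hne_ij)]
  have hdijf : pderiv (Sum.inl i) (pderiv (Sum.inl j) f) = aP := by
    rw [hdjf]
    simp [pderiv_mul, hCz i (Or.inl rfl), hAz i (Or.inl rfl), hxi, pderiv_X_self]
  have hR : Rayleigh (Sum.inl i) (Sum.inl j) f = bP * cP - aP * dP := by
    rw [Rayleigh, hdijf, hdif, hdjf, hfexp]
    ring
  have hDJ := dj_s13 N hij
  have hR2 : Rayleigh (Sum.inl i) (Sum.inl j) f = adjugate N i j * adjugate N j i := by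
    rw [hR, hbP, hcP, hdP, haP]
    linear_combination hDJ
  -- Hermitian symmetry
  have hSH : ∀ a b, MvPolynomial.map (starRingEnd ℂ) (S a b) = S b a := by
    intro a b
    rw [hS]
    simp only [Matrix.add_apply, Matrix.sum_apply, Matrix.map_apply]
    rw [map_add, map_sum]
    have hA' : ∀ t : Fin k, (starRingEnd ℂ) (A t a b) = A t b a := by
      intro t
      have := congrFun (congrFun (hA t) b) a
      simpa [Matrix.conjTranspose_apply] using this
    have hA0' : (starRingEnd ℂ) (A0 a b) = A0 b a := by
      have := congrFun (congrFun hA0 b) a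
      simpa [Matrix.conjTranspose_apply] using this
    simp [MvPolynomial.map_X, MvPolynomial.map_C, hA', hA0']
  have hNmap : N.map (MvPolynomial.map (starRingEnd ℂ)) = Nᵀ := by
    refine Matrix.ext fun a b => ?_
    rw [Matrix.map_apply, Matrix.transpose_apply, hNab, hNab, map_add, hSH]
    congr 1
    rcases eq_or_ne a b with rfl | hab
    · simp [apply_ite (MvPolynomial.map (starRingEnd ℂ))]
    · rw [if_neg (fun h => hab h.1), if_neg (fun h => hab h.1.symm)]
      simp
  have hgstar : MvPolynomial.map (starRingEnd ℂ) (adjugate N i j) = adjugate N j i := by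
    have h1 := congrFun (congrFun (RingHom.map_adjugate
      (MvPolynomial.map (starRingEnd ℂ)) N) i) j
    rw [RingHom.mapMatrix_apply, RingHom.mapMatrix_apply, hNmap, ← Matrix.adjugate_transpose] at h1
    rw [Matrix.map_apply] at h1
    exact h1.trans rfl
  exact ⟨adjugate N i j, by rw [hR2, hgstar]⟩
end

section
/- The polynomial f = x₁x₂x₃ + x₁ + x₂ + x₃ + 1 over the field 𝔽₂ satisfies: Δ₁₂(f) = x₃² + x₃ + 1, which is irreducible in 𝔽₂[x₃]; consequently there is no 3×3 matrix A over 𝔽₂ with f = det(diag(x₁,x₂,x₃) + A). -/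
set_option maxRecDepth 10000

open MvPolynomial Matrix

/-- The polynomial `f = x₁x₂x₃ + x₁ + x₂ + x₃ + 1` over `𝔽₂`. -/
noncomputable def f3 : MvPolynomial (Fin 3) (ZMod 2) :=
  X 0 * X 1 * X 2 + X 0 + X 1 + X 2 + 1

/-- `Δ₁₂(f) = x₃² + x₃ + 1`, which is irreducible over `𝔽₂`;
consequently `f` is not `det(diag(x₁,x₂,x₃) + A)` for any matrix `A` over `𝔽₂`. -/
theorem stmt15 :
    Rayleigh (0 : Fin 3) 1 f3 = X 2 ^ 2 + X 2 + 1 ∧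
    Irreducible (Polynomial.X ^ 2 + Polynomial.X + 1 : Polynomial (ZMod 2)) ∧
    ¬∃ A : Matrix (Fin 3) (Fin 3) (ZMod 2),
      f3 = (Matrix.diagonal (fun t => (X t : MvPolynomial (Fin 3) (ZMod 2))) + A.map C).det := by
  refine ⟨?_, ?_, ?_⟩
  · -- Part 1: the Rayleigh difference computation
    have h2 : (2 : MvPolynomial (Fin 3) (ZMod 2)) = 0 := by
      have := CharP.cast_eq_zero (MvPolynomial (Fin 3) (ZMod 2)) 2
      simpa using this
    simp only [Rayleigh, f3, map_add, _root_.map_one, pderiv_mul, pderiv_X_self,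
      pderiv_X_of_ne (show (1:Fin 3) ≠ 0 by decide), pderiv_X_of_ne (show (2:Fin 3) ≠ 0 by decide),
      pderiv_X_of_ne (show (0:Fin 3) ≠ 1 by decide), pderiv_X_of_ne (show (2:Fin 3) ≠ 1 by decide),
      pderiv_one, map_zero, mul_zero, zero_mul, add_zero, mul_one, one_mul, zero_add]
    linear_combination (-(X 2 ^ 2) - X 2) * h2
  · -- Part 2: irreducibility of x² + x + 1 over 𝔽₂
    have hd : (Polynomial.X ^ 2 + Polynomial.X + 1 : Polynomial (ZMod 2)).natDegree = 2 := by
      compute_degree!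
    rw [Polynomial.irreducible_iff_roots_eq_zero_of_degree_le_three (by rw [hd])
      (by rw [hd]; norm_num), Multiset.eq_zero_iff_forall_notMem]
    intro a ha
    rw [Polynomial.mem_roots (by intro h; rw [h] at hd; simp at hd)] at ha
    simp only [Polynomial.IsRoot, Polynomial.eval_add, Polynomial.eval_pow, Polynomial.eval_X,
      Polynomial.eval_one] at ha
    revert ha
    revert a
    decide
  · -- Part 3: no matrix A realizes f3 as det(diag(x) + A)
    rintro ⟨A, hA⟩
    have key : ∀ v : Fin 3 → ZMod 2,
        (v 0 + A 0 0) * (v 1 + A 1 1) * (v 2 + A 2 2) - (v 0 + A 0 0) * A 1 2 * A 2 1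
          - A 0 1 * A 1 0 * (v 2 + A 2 2) + A 0 1 * A 1 2 * A 2 0
          + A 0 2 * A 1 0 * A 2 1 - A 0 2 * (v 1 + A 1 1) * A 2 0
        = v 0 * v 1 * v 2 + v 0 + v 1 + v 2 + 1 := by
      intro v
      have h := congrArg (eval v) hA
      rw [show ((eval v) : MvPolynomial (Fin 3) (ZMod 2) →+* ZMod 2) _ = _ from
        (eval v).map_det _] at h
      simp only [RingHom.mapMatrix_apply, Matrix.map_add, Matrix.map_map] at h
      rw [Matrix.det_fin_three] at h
      simp only [Matrix.add_apply, Matrix.map_apply, Function.comp_apply, eval_C,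
        Matrix.diagonal_apply, f3, map_add, _root_.map_mul, _root_.map_one, eval_X,
        Fin.reduceEq, if_false, if_true, map_zero, zero_add] at h
      exact h.symm
    have hex : ∃ B : Matrix (Fin 3) (Fin 3) (ZMod 2), ∀ v : Fin 3 → ZMod 2,
        (v 0 + B 0 0) * (v 1 + B 1 1) * (v 2 + B 2 2) - (v 0 + B 0 0) * B 1 2 * B 2 1
          - B 0 1 * B 1 0 * (v 2 + B 2 2) + B 0 1 * B 1 2 * B 2 0
          + B 0 2 * B 1 0 * B 2 1 - B 0 2 * (v 1 + B 1 1) * B 2 0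
        = v 0 * v 1 * v 2 + v 0 + v 1 + v 2 + 1 := ⟨A, key⟩
    revert hex
    decide
end

section
/- Over the field 𝕂 = 𝔽₂[α]/(α² + α + 1), the polynomial f = x₁x₂x₃ + x₁ + x₂ + x₃ + 1 has a Hermitian determinantal representation: f = det of the matrix with rows (x₁, 1+α, 1+α), (α, x₂, 1+α), (α, α, x₃), which is Hermitian with respect to the involution α ↦ 1+α on 𝕂. -/
open MvPolynomial Matrix

/-- The field `𝕂 = 𝔽₂[α]/(α² + α + 1)` (i.e. `𝔽₄`). -/
abbrev Kfour : Type := AdjoinRoot (Polynomial.X ^ 2 + Polynomial.X + 1 : Polynomial (ZMod 2))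

/-- The element `α` of `𝕂`. -/
noncomputable def α4 : Kfour := AdjoinRoot.root _

/-- The constant part `A` of the determinantal representation. -/
noncomputable def A16 : Matrix (Fin 3) (Fin 3) Kfour :=
  !![0, 1 + α4, 1 + α4; α4, 0, 1 + α4; α4, α4, 0]

/-- over `𝕂 = 𝔽₂[α]/(α²+α+1)` with the involution `α ↦ 1+α`
(the Frobenius `x ↦ x²`), the polynomial `f = x₁x₂x₃ + x₁ + x₂ + x₃ + 1` has
the Hermitian determinantal representation with matrix rows
`(x₁, 1+α, 1+α)`, `(α, x₂, 1+α)`, `(α, α, x₃)`. -/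
theorem stmt16 :
    α4 ^ 2 + α4 + 1 = 0 ∧
    (∀ i j : Fin 3, (A16 i j) ^ 2 = A16 j i) ∧
    (Matrix.diagonal (fun t => (X t : MvPolynomial (Fin 3) Kfour)) + A16.map C).det =
      X 0 * X 1 * X 2 + X 0 + X 1 + X 2 + 1 := by
  have hroot : α4 ^ 2 + α4 + 1 = 0 := by
    have h := AdjoinRoot.isRoot_root (Polynomial.X ^ 2 + Polynomial.X + 1 : Polynomial (ZMod 2))
    simpa [α4, Polynomial.IsRoot] using h
  have h2 : (2 : Kfour) = 0 := by
    rw [show (2 : Kfour) = 1 + 1 from one_add_one_eq_two.symm,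
      ← map_one (AdjoinRoot.of (Polynomial.X ^ 2 + Polynomial.X + 1 : Polynomial (ZMod 2))),
      ← map_add, show (1 + 1 : ZMod 2) = 0 by decide, map_zero]
  refine ⟨hroot, ?_, ?_⟩
  · intro i j
    fin_cases i <;> fin_cases j <;> simp [A16, Matrix.vecHead, Matrix.vecTail] <;>
      first
        | linear_combination hroot
        | linear_combination hroot - (α4 + 1) * h2
  · have hC : (C α4 : MvPolynomial (Fin 3) Kfour) ^ 2 + C α4 + 1 = 0 := by
      rw [← map_pow, ← map_add, ← C_1, ← map_add, hroot, map_zero]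
    have h2C : (2 : MvPolynomial (Fin 3) Kfour) = 0 := by
      rw [show (2 : MvPolynomial (Fin 3) Kfour) = C 2 from (map_ofNat _ 2).symm, h2, map_zero]
    simp [Matrix.det_fin_three, A16, Matrix.diagonal, Matrix.map_apply, Matrix.vecHead,
      Matrix.vecTail]
    linear_combination (2 * C α4 + 1 - X 0 - X 1 - X 2) * hC - (C α4 + 1) * h2C
end

section
/- For n ≥ 2, let f_{2n+1} = x₁·∏_{j=1}^{n}(x_{2j+1}x_{2j+2} + 1) + ∏_{j=1}^{n}(x_{2j}x_{2j+1} + 1) ∈ 𝔽[x_1,...,x_{2n+1}] (with the convention x_{2n+2} = x_2). Then Δ₁₂(f_{2n+1}) = (x₃ − x_{2n+1})·∏_{i=3}^{2n}(x_i x_{i+1} + 1). -/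
open MvPolynomial

/-- The index of the paper's variable `x_m` (`1 ≤ m ≤ 2n+1`) in `Fin (2n+1)`,
with the paper's convention `x_{2n+2} = x_2`. -/
def pIdx (n m : ℕ) : Fin (2 * n + 1) :=
  ⟨(if m = 2 * n + 2 then 1 else m - 1) % (2 * n + 1), Nat.mod_lt _ (by omega)⟩

/-- The polynomial
`f_{2n+1} = x₁·∏_{j=1}^{n}(x_{2j+1}x_{2j+2} + 1) + ∏_{j=1}^{n}(x_{2j}x_{2j+1} + 1)`
with the convention `x_{2n+2} = x₂`. -/
noncomputable def fOdd (F : Type*) [Field F] (n : ℕ) :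
    MvPolynomial (Fin (2 * n + 1)) F :=
  X (pIdx n 1) *
      ∏ j ∈ Finset.range n, (X (pIdx n (2 * j + 3)) * X (pIdx n (2 * j + 4)) + 1) +
    ∏ j ∈ Finset.range n, (X (pIdx n (2 * j + 2)) * X (pIdx n (2 * j + 3)) + 1)

lemma pIdx_val (n m : ℕ) (h1 : 1 ≤ m) (h2 : m ≤ 2 * n + 1) : (pIdx n m).val = m - 1 := by
  unfold pIdx
  simp only
  rw [if_neg (by omega)]
  exact Nat.mod_eq_of_lt (by omega)

lemma pIdx_ne (n a b : ℕ) (ha1 : 1 ≤ a) (ha2 : a ≤ 2 * n + 1) (hb1 : 1 ≤ b)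
    (hb2 : b ≤ 2 * n + 1) (hab : a ≠ b) : pIdx n a ≠ pIdx n b := by
  apply Fin.ne_of_val_ne
  rw [pIdx_val n a ha1 ha2, pIdx_val n b hb1 hb2]
  omega

lemma pIdx_wrap (n : ℕ) : pIdx n (2 * n + 2) = pIdx n 2 := by
  apply Fin.ext
  show (if 2 * n + 2 = 2 * n + 2 then 1 else 2 * n + 2 - 1) % (2 * n + 1) =
    (if 2 = 2 * n + 2 then 1 else 2 - 1) % (2 * n + 1)
  rw [if_pos rfl]
  rcases eq_or_ne 2 (2 * n + 2) with h | h
  · rw [if_pos h]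
  · rw [if_neg h]

lemma X_pIdx_congr {F : Type*} [Field F] {n a b : ℕ} (h : a = b) :
    (X (pIdx n a) : MvPolynomial (Fin (2 * n + 1)) F) = X (pIdx n b) := by rw [h]

lemma pderiv_prod_zero {F : Type*} [Field F] {σ : Type*} (i : σ) {α : Type*}
    (s : Finset α) (g : α → MvPolynomial σ F) (h : ∀ a ∈ s, pderiv i (g a) = 0) :
    pderiv i (∏ a ∈ s, g a) = 0 := by
  classical
  induction s using Finset.induction with
  | empty => simp [pderiv_one]
  | insert _ _ hne ih =>
    rename_i a s
    rw [Finset.prod_insert hne, pderiv_mul, h a (Finset.mem_insert_self a s),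
      ih fun b hb => h b (Finset.mem_insert_of_mem hb)]
    ring

lemma pderiv_factor_zero {F : Type*} [Field F] {σ : Type*} {i a b : σ}
    (ha : a ≠ i) (hb : b ≠ i) :
    pderiv i ((X a * X b + 1 : MvPolynomial σ F)) = 0 := by
  rw [map_add, pderiv_one, pderiv_mul, pderiv_X_of_ne ha, pderiv_X_of_ne hb]
  ring

lemma prod_range_two_mul {M : Type*} [CommMonoid M] (m : ℕ) (h : ℕ → M) :
    ∏ k ∈ Finset.range (2 * m), h k = ∏ j ∈ Finset.range m, (h (2 * j) * h (2 * j + 1)) := by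
  induction m with
  | zero => simp
  | succ m ih =>
    have h2 : 2 * (m + 1) = (2 * m) + 1 + 1 := by ring
    rw [h2, Finset.prod_range_succ, Finset.prod_range_succ, ih, Finset.prod_range_succ,
      mul_assoc]

/-- `Δ₁₂(f_{2n+1}) = (x₃ − x_{2n+1})·∏_{i=3}^{2n}(x_i x_{i+1} + 1)`. -/
theorem stmt17 (F : Type*) [Field F] (n : ℕ) (hn : 2 ≤ n) :
    Rayleigh (pIdx n 1) (pIdx n 2) (fOdd F n) =
      (X (pIdx n 3) - X (pIdx n (2 * n + 1))) *
        ∏ i ∈ Finset.Icc 3 (2 * n), (X (pIdx n i) * X (pIdx n (i + 1)) + 1) := by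
  set A' : MvPolynomial (Fin (2 * n + 1)) F :=
    ∏ j ∈ Finset.range (n - 1), (X (pIdx n (2 * j + 3)) * X (pIdx n (2 * j + 4)) + 1) with hA'
  set B' : MvPolynomial (Fin (2 * n + 1)) F :=
    ∏ j ∈ Finset.range (n - 1), (X (pIdx n (2 * j + 4)) * X (pIdx n (2 * j + 5)) + 1) with hB'
  have hne : ∀ (m : ℕ), 3 ≤ m → m ≤ 2 * n + 1 → ∀ c, c = 1 ∨ c = 2 →
      pIdx n m ≠ pIdx n c := by
    rintro m h3 h2 c (rfl | rfl) <;>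
      exact pIdx_ne n m _ (by omega) h2 (by omega) (by omega) (by omega)
  have hA'd : ∀ c, c = 1 ∨ c = 2 → pderiv (pIdx n c) A' = 0 := by
    intro c hc
    refine pderiv_prod_zero _ _ _ fun j hj => ?_
    have hj' : j < n - 1 := Finset.mem_range.mp hj
    exact pderiv_factor_zero (hne _ (by omega) (by omega) c hc) (hne _ (by omega) (by omega) c hc)
  have hB'd : ∀ c, c = 1 ∨ c = 2 → pderiv (pIdx n c) B' = 0 := by
    intro c hc
    refine pderiv_prod_zero _ _ _ fun j hj => ?_
    have hj' : j < n - 1 := Finset.mem_range.mp hj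
    exact pderiv_factor_zero (hne _ (by omega) (by omega) c hc) (hne _ (by omega) (by omega) c hc)
  have hA : (∏ j ∈ Finset.range n, (X (pIdx n (2 * j + 3)) * X (pIdx n (2 * j + 4)) + 1) :
      MvPolynomial (Fin (2 * n + 1)) F) =
      A' * (X (pIdx n (2 * n + 1)) * X (pIdx n 2) + 1) := by
    rw [show Finset.range n = Finset.range (n - 1 + 1) from by congr 1; omega,
      Finset.prod_range_succ, X_pIdx_congr (show 2 * (n - 1) + 3 = 2 * n + 1 by omega),
      X_pIdx_congr (show 2 * (n - 1) + 4 = 2 * n + 2 by omega), pIdx_wrap, hA']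
  have hB : (∏ j ∈ Finset.range n, (X (pIdx n (2 * j + 2)) * X (pIdx n (2 * j + 3)) + 1) :
      MvPolynomial (Fin (2 * n + 1)) F) =
      B' * (X (pIdx n 2) * X (pIdx n 3) + 1) := by
    rw [show Finset.range n = Finset.range (n - 1 + 1) from by congr 1; omega,
      Finset.prod_range_succ', hB']
    congr 1
  have hfOdd : fOdd F n = X (pIdx n 1) * (A' * (X (pIdx n (2 * n + 1)) * X (pIdx n 2) + 1)) +
      B' * (X (pIdx n 2) * X (pIdx n 3) + 1) := by
    rw [fOdd, hA, hB]
  have h12 : pIdx n 1 ≠ pIdx n 2 :=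
    pIdx_ne n 1 2 (by omega) (by omega) (by omega) (by omega) (by omega)
  have h31 : pIdx n 3 ≠ pIdx n 1 := hne 3 (by omega) (by omega) 1 (Or.inl rfl)
  have h32 : pIdx n 3 ≠ pIdx n 2 := hne 3 (by omega) (by omega) 2 (Or.inr rfl)
  have hl1 : pIdx n (2 * n + 1) ≠ pIdx n 1 := hne _ (by omega) (by omega) 1 (Or.inl rfl)
  have hl2 : pIdx n (2 * n + 1) ≠ pIdx n 2 := hne _ (by omega) (by omega) 2 (Or.inr rfl)
  have hd1 : pderiv (pIdx n 1) (fOdd F n) =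
      A' * (X (pIdx n (2 * n + 1)) * X (pIdx n 2) + 1) := by
    rw [hfOdd]
    simp only [map_add, pderiv_mul, pderiv_one, pderiv_X_self, pderiv_X_of_ne h31,
      pderiv_X_of_ne hl1, pderiv_X_of_ne h12.symm, hA'd 1 (Or.inl rfl), hB'd 1 (Or.inl rfl)]
    ring
  have hd2 : pderiv (pIdx n 2) (fOdd F n) =
      X (pIdx n 1) * (A' * X (pIdx n (2 * n + 1))) + X (pIdx n 3) * B' := by
    rw [hfOdd]
    simp only [map_add, pderiv_mul, pderiv_one, pderiv_X_self, pderiv_X_of_ne h32,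
      pderiv_X_of_ne hl2, pderiv_X_of_ne h12, hA'd 2 (Or.inr rfl), hB'd 2 (Or.inr rfl)]
    ring
  have hd12 : pderiv (pIdx n 1) (pderiv (pIdx n 2) (fOdd F n)) =
      A' * X (pIdx n (2 * n + 1)) := by
    rw [hd2]
    simp only [map_add, pderiv_mul, pderiv_X_self, pderiv_X_of_ne h31,
      pderiv_X_of_ne hl1, hA'd 1 (Or.inl rfl), hB'd 1 (Or.inl rfl)]
    ring
  have hprod : (∏ i ∈ Finset.Icc 3 (2 * n), (X (pIdx n i) * X (pIdx n (i + 1)) + 1) :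
      MvPolynomial (Fin (2 * n + 1)) F) = A' * B' := by
    rw [show Finset.Icc 3 (2 * n) = Finset.Ico 3 (2 * n + 1) from rfl,
      Finset.prod_Ico_eq_prod_range,
      show 2 * n + 1 - 3 = 2 * (n - 1) from by omega, prod_range_two_mul,
      hA', hB', ← Finset.prod_mul_distrib]
    refine Finset.prod_congr rfl fun j _ => ?_
    rw [X_pIdx_congr (show 3 + 2 * j = 2 * j + 3 by omega),
      X_pIdx_congr (show 3 + 2 * j + 1 = 2 * j + 4 by omega),
      X_pIdx_congr (show 3 + (2 * j + 1) = 2 * j + 4 by omega),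
      X_pIdx_congr (show 3 + (2 * j + 1) + 1 = 2 * j + 5 by omega)]
  rw [Rayleigh, hd12, hd1, hd2, hfOdd, hprod]
  ring
end
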